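/- arXiv:2301.07434 — 6 statements merged into one kernel-verified Lean document; each statement's English description precedes it below -/
import Mathlib

section
/- Let a > 1. Then there exists a constant C ≥ 0 such that for every z ∈ ℂ and every r ∈ ℂ satisfying r² = z² − 2iaz − 1 and 0 ≤ Arg(r) < π (i.e., r lies in the branch of the square root with argument in [0, π)), one has |r + az − i| ≤ C · min{|z|, |z|²}. -/
open Complex

/-! With `u = r + a z - i` and `w = r - a z + i` one has `u w = (1 - a²) z²`, so
`‖u‖ = (a² - 1)‖z‖² / ‖w‖` and it suffices to bound `‖w‖` below by a positive multiple of
`max 1 ‖z‖`. For small `z` this comes from `Im w = Im r - a Im z + 1 ≥ 1 - a‖z‖`, as the branch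
forces `Im r ≥ 0`. For `‖z‖ ≥ 1/(2a)`, the triangle inequality `‖u‖ ≤ ‖w‖ + 2a‖z‖ + 2` turns the
product identity into `(a² - 1)‖z‖² ≤ ‖w‖ (‖w‖ + 6a‖z‖)`, which forces `‖w‖ ≳ ‖z‖`. -/

lemma min_one_div_mul_le_of_mul_sq_le {A K d M : ℝ} (hK : 0 ≤ K) (hd : 0 ≤ d)
    (hM : 0 ≤ M) (h : A * M ^ 2 ≤ d * (d + K * M)) : min 1 (A / (1 + K)) * M ≤ d := by
  rcases le_or_gt M d with hMd | hdM
  · nlinarith [min_le_left 1 (A / (1 + K))]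
  · have : A / (1 + K) * M ≤ d := by
      by_contra! hlt
      have hMpos : 0 < M := lt_of_le_of_ne hM (by rintro rfl; linarith)
      have : d * (d + K * M) < A * M ^ 2 := calc
        d * (d + K * M) ≤ d * M * (1 + K) := by nlinarith
        _ < A / (1 + K) * M * M * (1 + K) := by gcongr
        _ = A * M ^ 2 := by field_simp
      linarith
    exact le_trans (mul_le_mul_of_nonneg_right (min_le_right _ _) hM) this

lemma le_div_mul_min_of_mul_eq {A κ s d M : ℝ} (hκ : 0 < κ) (hs : 0 ≤ s) (hM : 0 ≤ M)
    (hsd : s * d = A * M ^ 2) (hd : κ ≤ d) (hdM : κ * M ≤ d) :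
    s ≤ A / κ * min M (M ^ 2) := by
  rw [div_mul_eq_mul_div, le_div_iff₀ hκ]
  rcases min_choice M (M ^ 2) with h | h <;> rw [h]
  · rcases hM.eq_or_lt with rfl | hMpos
    · nlinarith
    · nlinarith [mul_le_mul_of_nonneg_left hdM hs]
  · nlinarith [mul_le_mul_of_nonneg_left hd hs]

lemma exists_pos_forall_le_of_mul_eq_sq {a : ℝ} (ha : 1 < a) :
    ∃ κ > 0, ∀ s d M : ℝ, 0 ≤ d → 0 ≤ M → s * d = (a ^ 2 - 1) * M ^ 2 →
      s ≤ d + 2 * a * M + 2 → 1 - a * M ≤ d → κ ≤ d ∧ κ * M ≤ d := by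
  set c := min 1 ((a ^ 2 - 1) / (1 + 6 * a))
  have hc : 0 < c := lt_min one_pos (div_pos (by nlinarith) (by positivity))
  have hc1 : c ≤ 1 := min_le_left _ _
  refine ⟨c / (2 * a), by positivity, fun s d M hd hM hsd hs hdM => ?_⟩
  have hκ : c / (2 * a) * (2 * a) = c := div_mul_cancel₀ c (by positivity)
  rcases le_or_gt (2 * a * M) 1 with hsmall | hlarge
  · constructor <;> nlinarith
  · have : c * M ≤ d :=
      min_one_div_mul_le_of_mul_sq_le (by positivity) hd hM
        (by nlinarith [mul_le_mul_of_nonneg_left hs hd])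
    constructor <;> nlinarith

section

variable {a : ℝ} {z r : ℂ}

lemma mul_eq_of_sq_eq (hr : r ^ 2 = z ^ 2 - 2 * I * a * z - 1) :
    (r + a * z - I) * (r - a * z + I) = (1 - a ^ 2 : ℝ) * z ^ 2 := by
  push_cast
  linear_combination hr - I_sq

lemma norm_mul_norm_eq_of_sq_eq (ha : 1 ≤ a ^ 2) (hr : r ^ 2 = z ^ 2 - 2 * I * a * z - 1) :
    ‖r + a * z - I‖ * ‖r - a * z + I‖ = (a ^ 2 - 1) * ‖z‖ ^ 2 := by
  rw [← norm_mul, mul_eq_of_sq_eq hr, norm_mul, norm_pow, norm_real, Real.norm_eq_abs,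
    abs_of_nonpos (by linarith)]
  ring

lemma norm_add_mul_sub_I_le (ha : 0 ≤ a) :
    ‖r + a * z - I‖ ≤ ‖r - a * z + I‖ + 2 * a * ‖z‖ + 2 := calc
  ‖r + a * z - I‖ = ‖(r - a * z + I) + ((2 * a : ℝ) : ℂ) * z - 2 * I‖ := by
    congr 1; push_cast; ring
  _ ≤ ‖r - a * z + I‖ + ‖((2 * a : ℝ) : ℂ) * z‖ + ‖2 * I‖ :=
    norm_sub_le_of_le (norm_add_le _ _) le_rfl
  _ = ‖r - a * z + I‖ + 2 * a * ‖z‖ + 2 := by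
    rw [norm_mul, norm_real, Real.norm_of_nonneg (by positivity)]; simp

lemma one_sub_mul_norm_le (ha : 0 ≤ a) (hr : 0 ≤ r.im) : 1 - a * ‖z‖ ≤ ‖r - a * z + I‖ := calc
  1 - a * ‖z‖ ≤ r.im - a * z.im + 1 := by nlinarith [im_le_norm z]
  _ = (r - a * z + I).im := by simp
  _ ≤ ‖r - a * z + I‖ := im_le_norm _

end

/-- Lemma 3.1 of the paper. For `a > 1` there is `C ≥ 0` such
that whenever `r² = z² - 2iaz - 1` and `r` lies in the branch of the square root
with argument in `[0, π)`, one has `|r + az - i| ≤ C · min{|z|, |z|²}`. -/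
theorem statement3 (a : ℝ) (ha : 1 < a) :
    ∃ C : ℝ, 0 ≤ C ∧ ∀ z r : ℂ,
      r ^ 2 = z ^ 2 - 2 * Complex.I * (a : ℂ) * z - 1 →
      0 ≤ r.arg → r.arg < Real.pi →
      ‖r + (a : ℂ) * z - Complex.I‖ ≤
        C * min ‖z‖ (‖z‖ ^ 2) := by
  obtain ⟨κ, hκ, hbound⟩ := exists_pos_forall_le_of_mul_eq_sq ha
  refine ⟨(a ^ 2 - 1) / κ, div_nonneg (by nlinarith) hκ.le, fun z r hr harg _ => ?_⟩
  have hprod := norm_mul_norm_eq_of_sq_eq (by nlinarith) hr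
  obtain ⟨hd, hdM⟩ := hbound _ _ _ (norm_nonneg _) (norm_nonneg z) hprod
    (norm_add_mul_sub_I_le (by linarith))
    (one_sub_mul_norm_le (by linarith) (arg_nonneg_iff.mp harg))
  exact le_div_mul_min_of_mul_eq hκ (norm_nonneg _) (norm_nonneg z) hprod hd hdM
end

section
/- Let a > 1 and define f(z) = √(z² − 2iaz − 1) − az + i for z ∈ ℂ, where the square root is the branch with argument in [0, π). Then f has no zeros in ℂ, |f(z)| → ∞ as |z| → ∞, and consequently there exists a constant c > 0 such that |f(z)| ≥ c for all z ∈ ℂ. -/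
open Complex

/-- The branch `√w` of the complex square root with `Arg(√w) ∈ [0, π)`:
writing `w = |w| e^{iθ}` with `θ ∈ [0, 2π)`, set `√w = |w|^{1/2} e^{iθ/2}`. -/
noncomputable def cSqrt (w : ℂ) : ℂ :=
  (Real.sqrt ‖w‖ : ℂ) *
    Complex.exp (Complex.I *
      (((if 0 ≤ w.arg then w.arg else w.arg + 2 * Real.pi : ℝ) : ℂ) / 2))

/-!
Write `s = √(z² - 2iaz - 1)` and `u = az - i`. Since `s² - u² = -(a² - 1) z²`, we get
`f(z) · (s + u) = (1 - a²) z²` with `|s + u| ≤ (a + 1)(|z| + 1)`, so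
`|f(z)| ≥ (a - 1)|z|² / (|z| + 1)`: this gives the growth at infinity and a positive lower
bound away from `0`. Near `0` the branch choice `Im s ≥ 0` gives `Im f(z) ≥ 1 - a Im z`.
-/

lemma cSqrt_sq (w : ℂ) : cSqrt w ^ 2 = w := by
  unfold cSqrt
  set θ : ℝ := if 0 ≤ w.arg then w.arg else w.arg + 2 * Real.pi with hθ
  have hexp : exp (θ * I) = exp (w.arg * I) := by
    rw [hθ]
    split_ifs
    · rfl
    · push_cast
      rw [add_mul, exp_add, exp_two_pi_mul_I, mul_one]
  calc ((Real.sqrt ‖w‖ : ℂ) * exp (I * (θ / 2))) ^ 2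
      = ((Real.sqrt ‖w‖ ^ 2 : ℝ) : ℂ) * exp (θ * I) := by
        push_cast
        rw [mul_pow, ← exp_nat_mul]
        ring_nf
    _ = w := by rw [Real.sq_sqrt (norm_nonneg w), hexp, norm_mul_exp_arg_mul_I]

lemma cSqrt_im_nonneg (w : ℂ) : 0 ≤ (cSqrt w).im := by
  unfold cSqrt
  set θ : ℝ := if 0 ≤ w.arg then w.arg else w.arg + 2 * Real.pi with hθ
  have hθ_mem : 0 ≤ θ ∧ θ ≤ 2 * Real.pi := by
    have := neg_pi_lt_arg w
    have := arg_le_pi w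
    split_ifs at hθ <;> constructor <;> linarith [Real.pi_pos]
  rw [show I * ((θ : ℂ) / 2) = ((θ / 2 : ℝ) : ℂ) * I by push_cast; ring, im_ofReal_mul,
    exp_ofReal_mul_I_im]
  exact mul_nonneg (Real.sqrt_nonneg _)
    (Real.sin_nonneg_of_nonneg_of_le_pi (by linarith) (by linarith))

lemma norm_cSqrt (w : ℂ) : ‖cSqrt w‖ = Real.sqrt ‖w‖ := by
  simp [cSqrt, norm_exp]

noncomputable def sqrtSubLinear (a : ℝ) (z : ℂ) : ℂ :=
  cSqrt (z ^ 2 - 2 * I * a * z - 1) - a * z + I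

section

variable {a : ℝ}

lemma norm_cSqrt_le (ha : 1 ≤ a) (z : ℂ) :
    ‖cSqrt (z ^ 2 - 2 * I * a * z - 1)‖ ≤ ‖z‖ + a := by
  have hnorm : ‖z ^ 2 - 2 * I * a * z - 1‖ ≤ (‖z‖ + a) ^ 2 := by
    calc ‖z ^ 2 - 2 * I * a * z - 1‖ ≤ ‖z ^ 2‖ + ‖2 * I * a * z‖ + ‖(1 : ℂ)‖ :=
          (norm_sub_le _ _).trans (add_le_add_left (norm_sub_le _ _) _)
      _ = ‖z‖ ^ 2 + 2 * a * ‖z‖ + 1 := by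
          simp [abs_of_pos (zero_lt_one.trans_le ha)]
      _ ≤ (‖z‖ + a) ^ 2 := by nlinarith
  rw [norm_cSqrt]
  exact Real.sqrt_le_iff.mpr ⟨by positivity, hnorm⟩

lemma sqrtSubLinear_mul (a : ℝ) (z : ℂ) :
    sqrtSubLinear a z * (cSqrt (z ^ 2 - 2 * I * a * z - 1) + (a * z - I)) =
      (1 - (a : ℂ) ^ 2) * z ^ 2 := by
  rw [sqrtSubLinear]
  linear_combination cSqrt_sq (z ^ 2 - 2 * I * a * z - 1) - I_sq

lemma one_sub_mul_im_le_im_sqrtSubLinear (a : ℝ) (z : ℂ) :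
    1 - a * z.im ≤ (sqrtSubLinear a z).im := by
  have := cSqrt_im_nonneg (z ^ 2 - 2 * I * a * z - 1)
  simp only [sqrtSubLinear, add_im, sub_im, im_ofReal_mul, I_im]
  linarith

lemma sqrtSubLinear_ne_zero (ha : 1 < a) (z : ℂ) : sqrtSubLinear a z ≠ 0 := by
  intro hzero
  have hz : z = 0 := by
    have h := sqrtSubLinear_mul a z
    rw [hzero, zero_mul, eq_comm, mul_eq_zero] at h
    have ha2 : (1 : ℂ) - (a : ℂ) ^ 2 ≠ 0 := by exact_mod_cast (by nlinarith : 1 - a ^ 2 ≠ 0)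
    exact pow_eq_zero_iff two_ne_zero |>.mp (h.resolve_left ha2)
  have := one_sub_mul_im_le_im_sqrtSubLinear a z
  rw [hzero, hz] at this
  norm_num at this

lemma sub_one_mul_norm_sq_le (ha : 1 ≤ a) (z : ℂ) :
    (a - 1) * ‖z‖ ^ 2 ≤ ‖sqrtSubLinear a z‖ * (‖z‖ + 1) := by
  have hconj : ‖cSqrt (z ^ 2 - 2 * I * a * z - 1) + (a * z - I)‖ ≤ (a + 1) * (‖z‖ + 1) := by
    calc ‖cSqrt (z ^ 2 - 2 * I * a * z - 1) + (a * z - I)‖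
        ≤ ‖cSqrt (z ^ 2 - 2 * I * a * z - 1)‖ + (‖(a : ℂ) * z‖ + ‖I‖) :=
          (norm_add_le _ _).trans (add_le_add_right (norm_sub_le _ _) _)
      _ ≤ (‖z‖ + a) + (a * ‖z‖ + 1) := by
          gcongr
          · exact norm_cSqrt_le ha z
          · simp [abs_of_pos (zero_lt_one.trans_le ha)]
          · simp
      _ = (a + 1) * (‖z‖ + 1) := by ring
  have hprod : ‖sqrtSubLinear a z‖ * ‖cSqrt (z ^ 2 - 2 * I * a * z - 1) + (a * z - I)‖ =
      (a ^ 2 - 1) * ‖z‖ ^ 2 := by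
    rw [← norm_mul, sqrtSubLinear_mul, norm_mul, norm_pow,
      show (1 : ℂ) - (a : ℂ) ^ 2 = ((1 - a ^ 2 : ℝ) : ℂ) by push_cast; rfl, norm_real,
      Real.norm_of_nonpos (by nlinarith)]
    ring
  have : (a + 1) * ((a - 1) * ‖z‖ ^ 2) ≤ (a + 1) * (‖sqrtSubLinear a z‖ * (‖z‖ + 1)) := by
    nlinarith [mul_le_mul_of_nonneg_left hconj (norm_nonneg (sqrtSubLinear a z))]
  exact le_of_mul_le_mul_left this (by linarith)

lemma sub_one_mul_norm_sub_one_le (ha : 1 ≤ a) (z : ℂ) :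
    (a - 1) * (‖z‖ - 1) ≤ ‖sqrtSubLinear a z‖ := by
  have hpos : 0 < ‖z‖ + 1 := by positivity
  refine le_of_mul_le_mul_right ?_ hpos
  nlinarith [sub_one_mul_norm_sq_le ha z]

lemma exists_pos_le_norm_sqrtSubLinear (ha : 1 < a) :
    ∃ c : ℝ, 0 < c ∧ ∀ z : ℂ, c ≤ ‖sqrtSubLinear a z‖ := by
  have ha0 : 0 < a := zero_lt_one.trans ha
  set r := 1 / (2 * a) with hr
  have hr0 : 0 < r := by positivity
  refine ⟨min (1 / 2) ((a - 1) * r ^ 2 / (r + 1)), by positivity, fun z => ?_⟩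
  rcases le_or_gt ‖z‖ r with hsmall | hlarge
  · have him : a * z.im ≤ 1 / 2 := by
      calc a * z.im ≤ a * r := by
            gcongr; exact (le_abs_self _).trans ((abs_im_le_norm z).trans hsmall)
        _ = 1 / 2 := by rw [hr]; field_simp
    calc min (1 / 2) ((a - 1) * r ^ 2 / (r + 1)) ≤ 1 / 2 := min_le_left _ _
      _ ≤ (sqrtSubLinear a z).im := by
          linarith [one_sub_mul_im_le_im_sqrtSubLinear a z]
      _ ≤ ‖sqrtSubLinear a z‖ := (le_abs_self _).trans (abs_im_le_norm _)
  · refine (min_le_right _ _).trans ?_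
    rw [div_le_iff₀ (by positivity)]
    have hmono : r ^ 2 * (‖z‖ + 1) ≤ ‖z‖ ^ 2 * (r + 1) := by
      nlinarith [mul_le_mul_of_nonneg_left hlarge.le (mul_nonneg hr0.le (norm_nonneg z))]
    have key : (a - 1) * r ^ 2 * (‖z‖ + 1) ≤ ‖sqrtSubLinear a z‖ * (r + 1) * (‖z‖ + 1) := by
      nlinarith [sub_one_mul_norm_sq_le ha.le z]
    exact le_of_mul_le_mul_right key (by positivity)

end

/-- from the proof of Lemma 3.1. For `a > 1` the function
`f(z) = √(z² - 2iaz - 1) - az + i` (branch with argument in `[0, π)`) has no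
zeros, `|f(z)| → ∞` as `|z| → ∞`, and there is `c > 0` with `|f(z)| ≥ c` on `ℂ`. -/
theorem statement4 (a : ℝ) (ha : 1 < a) (f : ℂ → ℂ)
    (hf : ∀ z : ℂ, f z =
      cSqrt (z ^ 2 - 2 * Complex.I * (a : ℂ) * z - 1) - (a : ℂ) * z + Complex.I) :
    (∀ z : ℂ, f z ≠ 0) ∧
    (∀ M : ℝ, ∃ R : ℝ, ∀ z : ℂ, R ≤ ‖z‖ → M ≤ ‖f z‖) ∧
    (∃ c : ℝ, 0 < c ∧ ∀ z : ℂ, c ≤ ‖f z‖) := by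
  obtain rfl : f = sqrtSubLinear a := funext hf
  refine ⟨sqrtSubLinear_ne_zero ha, fun M => ⟨M / (a - 1) + 1, fun z hz => ?_⟩,
    exists_pos_le_norm_sqrtSubLinear ha⟩
  calc M = (a - 1) * (M / (a - 1) + 1 - 1) := by
        rw [add_sub_cancel_right, mul_div_cancel₀ _ (sub_pos.2 ha).ne']
    _ ≤ (a - 1) * (‖z‖ - 1) := by gcongr
    _ ≤ ‖sqrtSubLinear a z‖ := sub_one_mul_norm_sub_one_le ha.le z
end

section
/- Let a > 1 and for δ > 0 define G_δ(z) = (2/δ) e^{−1/δ} sinc(i/δ − az), where sinc(w) = sin(w)/w for w ≠ 0 and sinc(0) = 1. Then for every z ∈ ℂ one has |G_δ(z) − e^{iaz}| ≤ (e^{−2/δ} + aδ) e^{(a+1)|z|}. In particular G_δ converges to z ↦ e^{iaz} in 𝒜₁(ℂ) as δ → 0⁺. -/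
/-!
Writing `sinc w = ∫₀¹ exp (i w (2t - 1)) dt` and setting `c = 2/δ`, the factor `e^{-1/δ}` turns
`G_δ(z)` into the Laplace average `c ∫₀¹ e^{-ct} e^{iaz(1-2t)} dt`, whose weight `c e^{-ct}` has
mass `1 - e^{-c}` and concentrates at `t = 0` as `δ → 0⁺`. Hence `G_δ(z) - e^{iaz}` is
`c ∫₀¹ e^{-ct} (e^{iaz(1-2t)} - e^{iaz}) dt - e^{-c} e^{iaz}`. On `[0, 1]` the difference in the
integrand is at most `2a|z| t e^{a|z|}` by the mean value inequality, and `c ∫₀¹ t e^{-ct} dt ≤ 1/c`,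
which gives `|G_δ(z) - e^{iaz}| ≤ (e^{-2/δ} + aδ|z|) e^{a|z|}`; finally `|z| ≤ e^{|z|}`.
-/

/-- Membership in the space `𝒜₁(ℂ)` of exponentially bounded entire functions. -/
def MemA1 (F : ℂ → ℂ) : Prop :=
  Differentiable ℂ F ∧ ∃ A B : ℝ, 0 ≤ A ∧ 0 ≤ B ∧
    ∀ z : ℂ, ‖F z‖ ≤ A * Real.exp (B * ‖z‖)

/-- Convergence `F n → G` in `𝒜₁(ℂ)` as `n → ∞`: for some `B ≥ 0`,
`sup_z |F n z - G z| e^{-B|z|} → 0`. -/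
def TendstoA1 (F : ℕ → ℂ → ℂ) (G : ℂ → ℂ) : Prop :=
  ∃ B : ℝ, 0 ≤ B ∧ ∀ ε : ℝ, 0 < ε → ∃ N : ℕ, ∀ n ≥ N, ∀ z : ℂ,
    ‖F n z - G z‖ ≤ ε * Real.exp (B * ‖z‖)

/-- Convergence `F δ → G` in `𝒜₁(ℂ)` as `δ → 0⁺`: for some `B ≥ 0`,
`sup_z |F δ z - G z| e^{-B|z|} → 0` as `δ → 0⁺`. -/
def TendstoA1Zero (F : ℝ → ℂ → ℂ) (G : ℂ → ℂ) : Prop :=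
  ∃ B : ℝ, 0 ≤ B ∧ ∀ ε : ℝ, 0 < ε → ∃ δ₀ : ℝ, 0 < δ₀ ∧ ∀ δ : ℝ, 0 < δ → δ < δ₀ →
    ∀ z : ℂ, ‖F δ z - G z‖ ≤ ε * Real.exp (B * ‖z‖)

/-- The sinus cardinalis: `sinc w = sin w / w` for `w ≠ 0` and `sinc 0 = 1`. -/
noncomputable def csinc (w : ℂ) : ℂ := if w = 0 then 1 else Complex.sin w / w

open Complex intervalIntegral Filter Topology

theorem Complex.norm_exp_sub_exp_le (u v : ℂ) :
    ‖exp u - exp v‖ ≤ ‖u - v‖ * Real.exp (max ‖u‖ ‖v‖) := by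
  have hderiv : ∀ x ∈ Metric.closedBall (0 : ℂ) (max ‖u‖ ‖v‖), ‖exp x‖ ≤ Real.exp (max ‖u‖ ‖v‖) :=
    fun x hx ↦ by
      rw [norm_exp, Real.exp_le_exp]
      exact (re_le_norm x).trans (mem_closedBall_zero_iff.mp hx)
  simpa only [mul_comm] using (convex_closedBall (0 : ℂ) _).norm_image_sub_le_of_norm_hasDerivWithin_le
    (fun x _ ↦ (hasDerivAt_exp x).hasDerivWithinAt) hderiv
    (mem_closedBall_zero_iff.mpr (le_max_right _ _)) (mem_closedBall_zero_iff.mpr (le_max_left _ _))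

theorem csinc_eq_integral (w : ℂ) : csinc w = ∫ t in (0 : ℝ)..1, exp (I * w * (2 * t - 1)) := by
  by_cases hw : w = 0
  · simp [csinc, hw]
  have h2Iw : 2 * I * w ≠ 0 := by simp [hw, I_ne_zero]
  have hintegrand : ∀ t : ℝ, exp (I * w * (2 * t - 1)) = exp (-(I * w)) * exp (2 * I * w * t) := by
    intro t; rw [← exp_add]; ring_nf
  simp_rw [hintegrand, integral_const_mul, integral_exp_mul_complex h2Iw, csinc, if_neg hw]
  have hsin : sin w = (exp (-(I * w)) - exp (I * w)) * I / 2 := by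
    simp only [sin, neg_mul, mul_comm w I]
  have hexp : exp (-(I * w)) * exp (I * w * 2) = exp (I * w) := by rw [← exp_add]; ring_nf
  rw [hsin]
  simp only [ofReal_one, ofReal_zero, mul_one, mul_zero, exp_zero]
  field_simp
  linear_combination (exp (-(I * w)) - exp (I * w)) * I_sq - hexp

theorem two_div_mul_exp_mul_csinc_eq_integral (δ u : ℂ) :
    2 / δ * exp (-(1 / δ)) * csinc (I / δ - u) =
      2 / δ * ∫ t in (0 : ℝ)..1, exp (-(2 / δ) * t) * exp (I * u * (1 - 2 * t)) := by
  rw [csinc_eq_integral, mul_assoc, ← integral_const_mul]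
  congr 2 with t
  rw [← exp_add, ← exp_add]
  congr 1
  linear_combination ((2 * t - 1) / δ) * I_sq

theorem mul_integral_exp_neg_mul_sub {c : ℂ} (hc : c ≠ 0) (v : ℂ) {f : ℝ → ℂ}
    (hf : IntervalIntegrable f MeasureTheory.volume 0 1) :
    c * (∫ t in (0 : ℝ)..1, exp (-c * t) * f t) - v =
      c * (∫ t in (0 : ℝ)..1, exp (-c * t) * (f t - v)) - exp (-c) * v := by
  have hexp : Continuous fun t : ℝ ↦ exp (-c * t) := by fun_prop
  simp_rw [mul_sub]
  rw [integral_sub (hf.continuousOn_mul hexp.continuousOn) ((hexp.intervalIntegrable 0 1).mul_const v),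
    integral_mul_const, integral_exp_mul_complex (neg_ne_zero.mpr hc)]
  simp only [ofReal_one, ofReal_zero, mul_one, mul_zero, exp_zero]
  field_simp
  ring

theorem integral_mul_exp_neg_mul_le {c : ℝ} (hc : 0 < c) :
    ∫ t in (0 : ℝ)..1, t * Real.exp (-c * t) ≤ 1 / c ^ 2 := by
  have hderiv : ∀ t : ℝ, HasDerivAt (fun s ↦ -((s / c + 1 / c ^ 2) * Real.exp (-c * s)))
      (t * Real.exp (-c * t)) t := by
    intro t
    have h : HasDerivAt (fun s ↦ -((s / c + 1 / c ^ 2) * Real.exp (-c * s))) _ t :=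
      ((((hasDerivAt_id t).div_const c).add_const (1 / c ^ 2)).mul
        ((hasDerivAt_id t).const_mul (-c)).exp).neg
    convert h using 1
    simp only [id]
    field_simp
    ring
  rw [integral_eq_sub_of_hasDerivAt (fun t _ ↦ hderiv t) (Continuous.intervalIntegrable (by fun_prop) _ _)]
  have : 0 < (1 / c + 1 / c ^ 2) * Real.exp (-c) := by positivity
  simp only [mul_one, mul_zero, Real.exp_zero, zero_div, zero_add]
  linarith

theorem norm_integral_exp_neg_mul_le {c M : ℝ} (hc : 0 < c) {f : ℝ → ℂ}
    (hf : ∀ t ∈ Set.Icc (0 : ℝ) 1, ‖f t‖ ≤ M * t) :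
    ‖∫ t in (0 : ℝ)..1, exp (-(c : ℂ) * t) * f t‖ ≤ M / c ^ 2 := by
  have hM : 0 ≤ M := by simpa using (norm_nonneg _).trans (hf 1 (by simp))
  calc ‖∫ t in (0 : ℝ)..1, exp (-(c : ℂ) * t) * f t‖
      ≤ ∫ t in (0 : ℝ)..1, M * (t * Real.exp (-c * t)) := by
        refine norm_integral_le_of_norm_le zero_le_one (Filter.Eventually.of_forall fun t ht ↦ ?_)
          (Continuous.intervalIntegrable (by fun_prop) _ _)
        rw [norm_mul, norm_exp, ← ofReal_neg, ← ofReal_mul, ofReal_re]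
        calc Real.exp (-c * t) * ‖f t‖ ≤ Real.exp (-c * t) * (M * t) :=
              mul_le_mul_of_nonneg_left (hf t (Set.Ioc_subset_Icc_self ht)) (Real.exp_nonneg _)
          _ = M * (t * Real.exp (-c * t)) := by ring
    _ ≤ M * (1 / c ^ 2) := by
        rw [integral_const_mul]
        exact mul_le_mul_of_nonneg_left (integral_mul_exp_neg_mul_le hc) hM
    _ = M / c ^ 2 := by ring

theorem norm_exp_mul_one_sub_two_mul_sub_exp_le (u : ℂ) {t : ℝ} (ht : t ∈ Set.Icc (0 : ℝ) 1) :
    ‖exp (I * u * (1 - 2 * t)) - exp (I * u)‖ ≤ 2 * ‖u‖ * Real.exp ‖u‖ * t := by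
  have hfactor : ‖(1 - 2 * t : ℂ)‖ ≤ 1 := by
    rw [show (1 - 2 * t : ℂ) = ((1 - 2 * t : ℝ) : ℂ) by push_cast; ring, norm_real,
      Real.norm_eq_abs, abs_le]
    constructor <;> linarith [ht.1, ht.2]
  have hmax : max ‖I * u * (1 - 2 * t)‖ ‖I * u‖ ≤ ‖u‖ := by
    simp only [norm_mul, norm_I, one_mul]
    exact max_le (mul_le_of_le_one_right (norm_nonneg u) hfactor) le_rfl
  have hdiff : ‖I * u * (1 - 2 * t) - I * u‖ = 2 * ‖u‖ * t := by
    rw [show I * u * (1 - 2 * t) - I * u = -((2 * t : ℝ) * (I * u)) by push_cast; ring, norm_neg,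
      norm_mul, norm_mul, norm_real, norm_I, Real.norm_of_nonneg (by linarith [ht.1])]
    ring
  calc ‖exp (I * u * (1 - 2 * t)) - exp (I * u)‖
      ≤ ‖I * u * (1 - 2 * t) - I * u‖ * Real.exp (max ‖I * u * (1 - 2 * t)‖ ‖I * u‖) :=
        norm_exp_sub_exp_le _ _
    _ ≤ 2 * ‖u‖ * t * Real.exp ‖u‖ := by
        rw [hdiff]
        have := ht.1
        gcongr
    _ = 2 * ‖u‖ * Real.exp ‖u‖ * t := by ring

theorem norm_two_div_mul_exp_mul_csinc_sub_exp_le {δ : ℝ} (hδ : 0 < δ) (u : ℂ) :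
    ‖2 / (δ : ℂ) * exp (-(1 / (δ : ℂ))) * csinc (I / δ - u) - exp (I * u)‖ ≤
      (Real.exp (-2 / δ) + δ * ‖u‖) * Real.exp ‖u‖ := by
  set c : ℝ := 2 / δ with hc_def
  have hc : 0 < c := by positivity
  have hcC : 2 / (δ : ℂ) = c := by push_cast [hc_def]; rfl
  have hcont : Continuous fun t : ℝ ↦ exp (I * u * (1 - 2 * t)) := by fun_prop
  rw [two_div_mul_exp_mul_csinc_eq_integral, hcC, mul_integral_exp_neg_mul_sub (ofReal_ne_zero.mpr hc.ne')
    _ (hcont.intervalIntegrable 0 1)]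
  calc _ ≤ ‖(c : ℂ)‖ * (2 * ‖u‖ * Real.exp ‖u‖ / c ^ 2) + ‖exp (-(c : ℂ))‖ * ‖exp (I * u)‖ := by
        refine (norm_sub_le _ _).trans ?_
        rw [norm_mul, norm_mul]
        gcongr
        exact norm_integral_exp_neg_mul_le hc fun t ht ↦
          norm_exp_mul_one_sub_two_mul_sub_exp_le u ht
    _ ≤ c * (2 * ‖u‖ * Real.exp ‖u‖ / c ^ 2) + Real.exp (-c) * Real.exp ‖u‖ := by
        rw [norm_real, Real.norm_of_nonneg hc.le, norm_exp, ← ofReal_neg, ofReal_re]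
        gcongr
        exact (norm_exp_le_exp_norm _).trans (by simp)
    _ = (Real.exp (-2 / δ) + δ * ‖u‖) * Real.exp ‖u‖ := by
        rw [hc_def, neg_div]
        field_simp
        ring

theorem add_mul_le_add_mul_exp {x y r : ℝ} (hx : 0 ≤ x) (hy : 0 ≤ y) (hr : 0 ≤ r) :
    x + y * r ≤ (x + y) * Real.exp r := by
  have h₁ : 1 ≤ Real.exp r := Real.one_le_exp hr
  have h₂ : r ≤ Real.exp r := by linarith [Real.add_one_le_exp r]
  nlinarith [mul_le_mul_of_nonneg_left h₁ hx, mul_le_mul_of_nonneg_left h₂ hy]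

theorem tendstoA1Zero_of_norm_sub_le {F : ℝ → ℂ → ℂ} {G : ℂ → ℂ} {B : ℝ} (hB : 0 ≤ B)
    {ε : ℝ → ℝ} (hε : Tendsto ε (𝓝[>] 0) (𝓝 0))
    (hF : ∀ δ : ℝ, 0 < δ → ∀ z : ℂ, ‖F δ z - G z‖ ≤ ε δ * Real.exp (B * ‖z‖)) :
    TendstoA1Zero F G := by
  refine ⟨B, hB, fun η hη ↦ ?_⟩
  obtain ⟨δ₀, hδ₀, hsmall⟩ := (nhdsGT_basis (0 : ℝ)).eventually_iff.mp
    (hε.eventually (Iio_mem_nhds hη))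
  exact ⟨δ₀, hδ₀, fun δ hδ hδδ₀ z ↦ (hF δ hδ z).trans <|
    mul_le_mul_of_nonneg_right (hsmall ⟨hδ, hδδ₀⟩).le (Real.exp_nonneg _)⟩

theorem tendsto_exp_neg_two_div_add_mul_nhdsGT_zero (a : ℝ) :
    Tendsto (fun δ : ℝ ↦ Real.exp (-2 / δ) + a * δ) (𝓝[>] 0) (𝓝 0) := by
  have hexp : Tendsto (fun δ : ℝ ↦ Real.exp (-2 / δ)) (𝓝[>] 0) (𝓝 0) := by
    simp_rw [div_eq_mul_inv]
    exact Real.tendsto_exp_atBot.comp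
      (tendsto_inv_nhdsGT_zero.const_mul_atTop_of_neg (by norm_num))
  have hlin : Tendsto (fun δ : ℝ ↦ a * δ) (𝓝[>] 0) (𝓝 0) := by
    simpa using tendsto_nhdsWithin_of_tendsto_nhds ((continuous_const_mul a).tendsto 0)
  simpa using hexp.add hlin

theorem norm_two_div_mul_exp_mul_csinc_sub_exp_mul_le {a δ : ℝ} (ha : 0 ≤ a) (hδ : 0 < δ)
    (z : ℂ) :
    ‖2 / (δ : ℂ) * exp (-(1 / (δ : ℂ))) * csinc (I / δ - a * z) - exp (I * a * z)‖ ≤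
      (Real.exp (-2 / δ) + a * δ) * Real.exp ((a + 1) * ‖z‖) := by
  have hnorm : ‖(a : ℂ) * z‖ = a * ‖z‖ := by rw [norm_mul, norm_real, Real.norm_of_nonneg ha]
  calc _ ≤ (Real.exp (-2 / δ) + δ * (a * ‖z‖)) * Real.exp (a * ‖z‖) := by
        rw [mul_assoc I, ← hnorm]
        exact norm_two_div_mul_exp_mul_csinc_sub_exp_le hδ _
    _ ≤ (Real.exp (-2 / δ) + a * δ) * Real.exp ‖z‖ * Real.exp (a * ‖z‖) := by
        rw [← mul_assoc δ, mul_comm δ]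
        gcongr
        exact add_mul_le_add_mul_exp (Real.exp_nonneg _) (by positivity) (norm_nonneg z)
    _ = (Real.exp (-2 / δ) + a * δ) * Real.exp ((a + 1) * ‖z‖) := by
        rw [mul_assoc, ← Real.exp_add]
        ring_nf

/-- from the proof of Theorem 3.2. For `a > 1` and
`G_δ(z) = (2/δ) e^{-1/δ} sinc(i/δ - az)` one has
`|G_δ(z) - e^{iaz}| ≤ (e^{-2/δ} + aδ) e^{(a+1)|z|}`; in particular
`G_δ → z ↦ e^{iaz}` in `𝒜₁(ℂ)` as `δ → 0⁺`. -/
theorem statement6 (a : ℝ) (ha : 1 < a) (G : ℝ → ℂ → ℂ)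
    (hG : ∀ δ : ℝ, ∀ z : ℂ, G δ z = (2 / (δ : ℂ)) * Complex.exp (-(1 / (δ : ℂ))) *
      csinc (Complex.I / (δ : ℂ) - (a : ℂ) * z)) :
    (∀ δ : ℝ, 0 < δ → ∀ z : ℂ,
      ‖G δ z - Complex.exp (Complex.I * (a : ℂ) * z)‖ ≤
        (Real.exp (-2 / δ) + a * δ) * Real.exp ((a + 1) * ‖z‖)) ∧
    TendstoA1Zero G (fun z => Complex.exp (Complex.I * (a : ℂ) * z)) := by
  have hbound : ∀ δ : ℝ, 0 < δ → ∀ z : ℂ,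
      ‖G δ z - exp (I * a * z)‖ ≤ (Real.exp (-2 / δ) + a * δ) * Real.exp ((a + 1) * ‖z‖) :=
    fun δ hδ z ↦ by
      rw [hG]
      exact norm_two_div_mul_exp_mul_csinc_sub_exp_mul_le (by linarith) hδ z
  exact ⟨hbound, tendstoA1Zero_of_norm_sub_le (by linarith)
    (tendsto_exp_neg_two_div_add_mul_nhdsGT_zero a) hbound⟩
end

section
/- Let k0 > 0, a ∈ ℝ∖[−k0,k0], and for each n ∈ ℕ and j ∈ {0,…,n} let μ_{j,n} be a complex Borel measure on [−k0,k0] and C_j(n) ∈ ℂ, such that Σ_{j=0}^n C_j(n) ∫_{−k0}^{k0} (ik)^l dμ_{j,n}(k) = (ia)^l for every n ∈ ℕ and every l ∈ {0,…,n}. If there exist constants κ₁, κ₂ ≥ 0 such that |μ_{j,n}|([−k0,k0]) ≤ κ₁ⁿ and |C_j(n)| ≤ κ₂ⁿ for every n ∈ ℕ and j ∈ {0,…,n}, then the functions F_n(z) = Σ_{j=0}^n C_j(n) ∫_{−k0}^{k0} e^{ikz} dμ_{j,n}(k) satisfy F_n(z) = ∫_{−k0}^{k0} e^{ikz} dμ_n(k)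 with the complex Borel measure μ_n = Σ_{j=0}^n C_j(n) μ_{j,n}, and F_n converges to z ↦ e^{iaz} in 𝒜₁(ℂ) as n → ∞; in particular the sequence F_n is superoscillating. -/
open MeasureTheory Complex Filter Set

/-- Integral of a complex-valued function against a complex Borel measure,
defined via the Jordan decompositions of the real and imaginary parts of the measure. -/
noncomputable def cmInt (μ : ComplexMeasure ℝ) (f : ℝ → ℂ) : ℂ :=
    ((∫ x, f x ∂((ComplexMeasure.re μ).toJordanDecomposition.posPart))
      - (∫ x, f x ∂((ComplexMeasure.re μ).toJordanDecomposition.negPart)))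
    + Complex.I * ((∫ x, f x ∂((ComplexMeasure.im μ).toJordanDecomposition.posPart))
      - (∫ x, f x ∂((ComplexMeasure.im μ).toJordanDecomposition.negPart)))

/-- The complex measure `μ` is supported in the set `S`. -/
def cmSupportedIn (μ : ComplexMeasure ℝ) (S : Set ℝ) : Prop :=
  ∀ B : Set ℝ, MeasurableSet B → Disjoint B S → μ B = 0

/-- Total variation `|μ|(B)` of a complex measure on a set `B`: the supremum of
`∑ |μ (P i)|` over finite disjoint families of measurable subsets of `B`. -/
noncomputable def cmVar (μ : ComplexMeasure ℝ) (B : Set ℝ) : ℝ :=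
  sSup {r : ℝ | ∃ (n : ℕ) (P : Fin n → Set ℝ), (∀ i, MeasurableSet (P i)) ∧
    Pairwise (Function.onFun Disjoint P) ∧ (∀ i, P i ⊆ B) ∧
    r = ∑ i, ‖μ (P i)‖}

/-!
The moment conditions say that `∑ⱼ Cⱼ(n) ∫ e^{ikz} dμⱼ,ₙ(k)` and `e^{iaz}` have the same Taylor
polynomial of degree `n` in `z`, so `F_n(z) - e^{iaz}` is a difference of Taylor remainders of the
exponential. For `D ≥ 1` the remainder after the terms of degree `< m` is at most
`e^{D|w|} / D^m`, so with `ρ = max k0 |a|` and `|∫ f dμ| ≤ 2 sup |f| · |μ|` one gets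
`|F_n(z) - e^{iaz}| ≤ (2 (n + 1) (κ₁κ₂)ⁿ + 1) / D^{n+1} · e^{Dρ|z|}`,
and the coefficient tends to `0` once `D > max 1 (κ₁κ₂)`.
-/

open scoped Nat Topology

namespace MeasureTheory

variable {α : Type*} [MeasurableSpace α]

theorem Measure.integral_sub_eq_of_toSignedMeasure_sub_eq {μ₁ ν₁ μ₂ ν₂ : Measure α}
    [IsFiniteMeasure μ₁] [IsFiniteMeasure ν₁] [IsFiniteMeasure μ₂] [IsFiniteMeasure ν₂]
    (h : μ₁.toSignedMeasure - ν₁.toSignedMeasure = μ₂.toSignedMeasure - ν₂.toSignedMeasure)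
    {f : α → ℂ} (h₁ : Integrable f μ₁) (h₂ : Integrable f ν₁) (h₃ : Integrable f μ₂)
    (h₄ : Integrable f ν₂) :
    ∫ x, f x ∂μ₁ - ∫ x, f x ∂ν₁ = ∫ x, f x ∂μ₂ - ∫ x, f x ∂ν₂ := by
  have hm : μ₁ + ν₂ = μ₂ + ν₁ := by
    rw [← Measure.toSignedMeasure_eq_toSignedMeasure_iff, Measure.toSignedMeasure_add,
      Measure.toSignedMeasure_add]
    exact sub_eq_sub_iff_add_eq_add.mp h
  have hint := congrArg (fun m => ∫ x, f x ∂m) hm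
  simp only [integral_add_measure h₁ h₄, integral_add_measure h₃ h₂] at hint
  linear_combination hint

theorem VectorMeasure.integrable_variation_smul {V 𝕜 E : Type*} [NormedAddCommGroup V]
    [NormedField 𝕜] [NormedSpace 𝕜 V] [NormedAddCommGroup E] {μ : VectorMeasure α V}
    {f : α → E} (c : 𝕜) (hf : Integrable f μ.variation) : Integrable f (c • μ).variation := by
  rw [VectorMeasure.variation_smul]
  exact hf.smul_measure ENNReal.coe_ne_top

namespace SignedMeasure

noncomputable def jordanIntegral (s : SignedMeasure α) (f : α → ℂ) : ℂ :=
  ∫ x, f x ∂s.toJordanDecomposition.posPart - ∫ x, f x ∂s.toJordanDecomposition.negPart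

variable {s t : SignedMeasure α} {f g : α → ℂ}

instance (s : SignedMeasure α) : IsFiniteMeasure s.variation := by
  rw [← totalVariation_eq_variation]
  infer_instance

theorem integrable_posPart (hs : Integrable f s.variation) :
    Integrable f s.toJordanDecomposition.posPart := by
  rw [← totalVariation_eq_variation, totalVariation] at hs
  exact hs.mono_measure (Measure.le_add_right le_rfl)

theorem integrable_negPart (hs : Integrable f s.variation) :
    Integrable f s.toJordanDecomposition.negPart := by
  rw [← totalVariation_eq_variation, totalVariation] at hs
  exact hs.mono_measure (Measure.le_add_left le_rfl)

theorem jordanIntegral_eq_of_eq_sub {μ ν : Measure α} [IsFiniteMeasure μ] [IsFiniteMeasure ν]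
    (h : s = μ.toSignedMeasure - ν.toSignedMeasure) (hs : Integrable f s.variation)
    (hμ : Integrable f μ) (hν : Integrable f ν) :
    s.jordanIntegral f = ∫ x, f x ∂μ - ∫ x, f x ∂ν :=
  Measure.integral_sub_eq_of_toSignedMeasure_sub_eq
    (s.toSignedMeasure_toJordanDecomposition.trans h) (integrable_posPart hs)
    (integrable_negPart hs) hμ hν

@[simp]
theorem jordanIntegral_zero (f : α → ℂ) : (0 : SignedMeasure α).jordanIntegral f = 0 := by
  simp [jordanIntegral, toJordanDecomposition_zero]

theorem jordanIntegral_add_measure (hs : Integrable f s.variation)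
    (ht : Integrable f t.variation) :
    (s + t).jordanIntegral f = s.jordanIntegral f + t.jordanIntegral f := by
  have hdecomp : s + t =
      Measure.toSignedMeasure (s.toJordanDecomposition.posPart + t.toJordanDecomposition.posPart)
      - Measure.toSignedMeasure
          (s.toJordanDecomposition.negPart + t.toJordanDecomposition.negPart) := by
    conv_lhs => rw [← s.toSignedMeasure_toJordanDecomposition,
      ← t.toSignedMeasure_toJordanDecomposition]
    simp only [JordanDecomposition.toSignedMeasure, Measure.toSignedMeasure_add]
    abel
  rw [jordanIntegral_eq_of_eq_sub hdecomp
      ((hs.add_measure ht).mono_measure VectorMeasure.variation_add_le)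
      ((integrable_posPart hs).add_measure (integrable_posPart ht))
      ((integrable_negPart hs).add_measure (integrable_negPart ht)),
    integral_add_measure (integrable_posPart hs) (integrable_posPart ht),
    integral_add_measure (integrable_negPart hs) (integrable_negPart ht)]
  unfold jordanIntegral
  ring

theorem jordanIntegral_smul_measure (r : ℝ) (s : SignedMeasure α) (f : α → ℂ) :
    (r • s).jordanIntegral f = r * s.jordanIntegral f := by
  unfold jordanIntegral
  rw [s.toJordanDecomposition_smul_real r]
  rcases le_or_gt 0 r with hr | hr
  · rw [JordanDecomposition.real_smul_posPart_nonneg _ _ hr,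
      JordanDecomposition.real_smul_negPart_nonneg _ _ hr, integral_smul_nnreal_measure,
      integral_smul_nnreal_measure]
    simp only [NNReal.smul_def, Real.coe_toNNReal _ hr, Complex.real_smul]
    ring
  · rw [JordanDecomposition.real_smul_posPart_neg _ _ hr,
      JordanDecomposition.real_smul_negPart_neg _ _ hr, integral_smul_nnreal_measure,
      integral_smul_nnreal_measure]
    simp only [NNReal.smul_def, Real.coe_toNNReal _ (neg_nonneg.2 hr.le), Complex.real_smul,
      Complex.ofReal_neg]
    ring

theorem jordanIntegral_add (hf : Integrable f s.variation) (hg : Integrable g s.variation) :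
    s.jordanIntegral (fun x => f x + g x) = s.jordanIntegral f + s.jordanIntegral g := by
  unfold jordanIntegral
  rw [integral_add (integrable_posPart hf) (integrable_posPart hg),
    integral_add (integrable_negPart hf) (integrable_negPart hg)]
  ring

theorem jordanIntegral_const_mul (c : ℂ) (s : SignedMeasure α) (f : α → ℂ) :
    s.jordanIntegral (fun x => c * f x) = c * s.jordanIntegral f := by
  unfold jordanIntegral
  rw [integral_const_mul, integral_const_mul, mul_sub]

theorem jordanIntegral_finsetSum {ι : Type*} (u : Finset ι) {f : ι → α → ℂ}
    (hf : ∀ i ∈ u, Integrable (f i) s.variation) :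
    s.jordanIntegral (fun x => ∑ i ∈ u, f i x) = ∑ i ∈ u, s.jordanIntegral (f i) := by
  unfold jordanIntegral
  rw [integral_finsetSum u fun i hi => integrable_posPart (hf i hi),
    integral_finsetSum u fun i hi => integrable_negPart (hf i hi), Finset.sum_sub_distrib]

theorem norm_jordanIntegral_le (hf : Integrable f s.variation) :
    ‖s.jordanIntegral f‖ ≤ ∫ x, ‖f x‖ ∂s.variation := by
  rw [← totalVariation_eq_variation, totalVariation,
    integral_add_measure (integrable_posPart hf).norm (integrable_negPart hf).norm]
  exact (norm_sub_le _ _).trans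
    (add_le_add (norm_integral_le_integral_norm _) (norm_integral_le_integral_norm _))

end SignedMeasure

namespace ComplexMeasure

variable (μ : ComplexMeasure α)

theorem re_complex_smul (c : ℂ) : re (c • μ) = c.re • re μ + (-c.im) • im μ := by
  ext i hi
  change ((c • μ) i).re = c.re * (μ i).re + -c.im * (μ i).im
  simp only [smul_apply, smul_eq_mul, Complex.mul_re]
  ring

theorem im_complex_smul (c : ℂ) : im (c • μ) = c.re • im μ + c.im • re μ := by
  ext i hi
  change ((c • μ) i).im = c.re * (μ i).im + c.im * (μ i).re
  simp only [smul_apply, smul_eq_mul, Complex.mul_im]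

theorem variation_re_le : (re μ).variation ≤ μ.variation :=
  VectorMeasure.variation_le_of_forall_enorm_le fun E _ =>
    (enorm_le_iff_norm_le.2 (Complex.abs_re_le_norm (μ E))).trans
      (VectorMeasure.enorm_measure_le_variation μ E)

theorem variation_im_le : (im μ).variation ≤ μ.variation :=
  VectorMeasure.variation_le_of_forall_enorm_le fun E _ =>
    (enorm_le_iff_norm_le.2 (Complex.abs_im_le_norm (μ E))).trans
      (VectorMeasure.enorm_measure_le_variation μ E)

theorem variation_le_variation_re_add_variation_im :
    μ.variation ≤ (re μ).variation + (im μ).variation :=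
  VectorMeasure.variation_le_of_forall_enorm_le fun E _ => by
    refine le_trans ?_ (add_le_add (VectorMeasure.enorm_measure_le_variation (re μ) E)
      (VectorMeasure.enorm_measure_le_variation (im μ) E))
    simp only [← ofReal_norm, ← ENNReal.ofReal_add (norm_nonneg _) (norm_nonneg _)]
    exact ENNReal.ofReal_le_ofReal (Complex.norm_le_abs_re_add_abs_im (μ E))

instance : IsFiniteMeasure μ.variation :=
  isFiniteMeasure_of_le _ μ.variation_le_variation_re_add_variation_im

end ComplexMeasure

end MeasureTheory

section cmInt

open SignedMeasure ComplexMeasure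

variable {μ ν : ComplexMeasure ℝ} {f g : ℝ → ℂ} {S : Set ℝ}

theorem cmInt_eq_jordanIntegral (μ : ComplexMeasure ℝ) (f : ℝ → ℂ) :
    cmInt μ f = (re μ).jordanIntegral f + I * (im μ).jordanIntegral f :=
  rfl

theorem cmInt_add_measure (hμ : Integrable f μ.variation) (hν : Integrable f ν.variation) :
    cmInt (μ + ν) f = cmInt μ f + cmInt ν f := by
  simp only [cmInt_eq_jordanIntegral, map_add,
    jordanIntegral_add_measure (hμ.mono_measure μ.variation_re_le)
      (hν.mono_measure ν.variation_re_le),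
    jordanIntegral_add_measure (hμ.mono_measure μ.variation_im_le)
      (hν.mono_measure ν.variation_im_le)]
  ring

theorem cmInt_smul_measure (c : ℂ) (hμ : Integrable f μ.variation) :
    cmInt (c • μ) f = c * cmInt μ f := by
  have hre := hμ.mono_measure μ.variation_re_le
  have him := hμ.mono_measure μ.variation_im_le
  rw [cmInt_eq_jordanIntegral, cmInt_eq_jordanIntegral, re_complex_smul,
    im_complex_smul,
    jordanIntegral_add_measure (VectorMeasure.integrable_variation_smul _ hre)
      (VectorMeasure.integrable_variation_smul _ him),
    jordanIntegral_add_measure (VectorMeasure.integrable_variation_smul _ him)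
      (VectorMeasure.integrable_variation_smul _ hre)]
  simp only [jordanIntegral_smul_measure]
  conv_rhs => rw [← Complex.re_add_im c]
  push_cast
  linear_combination (-(c.im : ℂ) * (im μ).jordanIntegral f) * Complex.I_sq

theorem cmInt_finsetSum_smul_measure {ι : Type*} (u : Finset ι) (c : ι → ℂ)
    {μ : ι → ComplexMeasure ℝ} (hμ : ∀ j ∈ u, Integrable f (μ j).variation) :
    cmInt (∑ j ∈ u, c j • μ j) f = ∑ j ∈ u, c j * cmInt (μ j) f := by
  classical
  induction u using Finset.induction_on with
  | empty =>
    simp only [Finset.sum_empty, cmInt_eq_jordanIntegral, map_zero, jordanIntegral_zero]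
    ring
  | insert a u ha ih =>
    have hsum : Integrable f (∑ j ∈ u, c j • μ j).variation :=
      (integrable_finsetSum_measure.2 fun j hj => VectorMeasure.integrable_variation_smul (c j)
        (hμ j (Finset.mem_insert_of_mem hj))).mono_measure
        (VectorMeasure.variation_finsetSum_le _ _)
    rw [Finset.sum_insert ha, Finset.sum_insert ha,
      cmInt_add_measure (VectorMeasure.integrable_variation_smul _ (hμ a (u.mem_insert_self a)))
        hsum, cmInt_smul_measure _ (hμ a (u.mem_insert_self a)),
      ih fun j hj => hμ j (Finset.mem_insert_of_mem hj)]

theorem cmInt_add (hf : Integrable f μ.variation) (hg : Integrable g μ.variation) :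
    cmInt μ (fun x => f x + g x) = cmInt μ f + cmInt μ g := by
  simp only [cmInt_eq_jordanIntegral,
    jordanIntegral_add (hf.mono_measure μ.variation_re_le) (hg.mono_measure μ.variation_re_le),
    jordanIntegral_add (hf.mono_measure μ.variation_im_le) (hg.mono_measure μ.variation_im_le)]
  ring

theorem cmInt_const_mul (μ : ComplexMeasure ℝ) (c : ℂ) (f : ℝ → ℂ) :
    cmInt μ (fun x => c * f x) = c * cmInt μ f := by
  simp only [cmInt_eq_jordanIntegral, jordanIntegral_const_mul]
  ring

theorem cmInt_finsetSum {ι : Type*} (u : Finset ι) {f : ι → ℝ → ℂ}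
    (hf : ∀ i ∈ u, Integrable (f i) μ.variation) :
    cmInt μ (fun x => ∑ i ∈ u, f i x) = ∑ i ∈ u, cmInt μ (f i) := by
  simp only [cmInt_eq_jordanIntegral,
    jordanIntegral_finsetSum u fun i hi => (hf i hi).mono_measure μ.variation_re_le,
    jordanIntegral_finsetSum u fun i hi => (hf i hi).mono_measure μ.variation_im_le,
    Finset.mul_sum, Finset.sum_add_distrib]

theorem norm_cmInt_le_two_mul_integral_norm (hf : Integrable f μ.variation) :
    ‖cmInt μ f‖ ≤ 2 * ∫ x, ‖f x‖ ∂μ.variation := by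
  have hre := norm_jordanIntegral_le (hf.mono_measure μ.variation_re_le)
  have him := norm_jordanIntegral_le (hf.mono_measure μ.variation_im_le)
  have hmono : ∀ ν ≤ μ.variation, ∫ x, ‖f x‖ ∂ν ≤ ∫ x, ‖f x‖ ∂μ.variation := fun ν hν =>
    integral_mono_measure hν (Eventually.of_forall fun x => norm_nonneg (f x)) hf.norm
  calc ‖cmInt μ f‖
      ≤ ‖(re μ).jordanIntegral f‖ + ‖(im μ).jordanIntegral f‖ := by
        rw [cmInt_eq_jordanIntegral]
        refine (norm_add_le _ _).trans_eq ?_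
        rw [norm_mul, Complex.norm_I, one_mul]
    _ ≤ 2 * ∫ x, ‖f x‖ ∂μ.variation := by
        linarith [hmono _ μ.variation_re_le, hmono _ μ.variation_im_le]

theorem sum_norm_le_variation_real {n : ℕ} {P : Fin n → Set ℝ} (hm : ∀ i, MeasurableSet (P i))
    (hd : Pairwise (Function.onFun Disjoint P)) :
    ∑ i, ‖μ (P i)‖ ≤ μ.variation.real univ :=
  calc ∑ i, ‖μ (P i)‖ ≤ ∑ i, μ.variation.real (P i) :=
        Finset.sum_le_sum fun i _ => VectorMeasure.norm_measure_le_variation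
    _ = μ.variation.real (⋃ i, P i) := (measureReal_iUnion_fintype hd hm).symm
    _ ≤ μ.variation.real univ := measureReal_mono (subset_univ _)

theorem variation_real_le_cmVar (hS : MeasurableSet S) : μ.variation.real S ≤ cmVar μ S := by
  have hbdd : BddAbove {r : ℝ | ∃ (n : ℕ) (P : Fin n → Set ℝ), (∀ i, MeasurableSet (P i)) ∧
      Pairwise (Function.onFun Disjoint P) ∧ (∀ i, P i ⊆ S) ∧ r = ∑ i, ‖μ (P i)‖} :=
    ⟨μ.variation.real univ, by
      rintro r ⟨n, P, hm, hd, -, rfl⟩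
      exact sum_norm_le_variation_real hm hd⟩
  have hnonneg : 0 ≤ cmVar μ S :=
    le_csSup hbdd ⟨0, Fin.elim0, fun i => i.elim0, fun i => i.elim0, fun i => i.elim0, by simp⟩
  refine ENNReal.toReal_le_of_le_ofReal hnonneg (le_of_forall_lt fun c hc => ?_)
  obtain ⟨P, hPS, hPd, hPm, hc⟩ := VectorMeasure.exists_lt_sum_of_lt_variation μ hS hc
  have hmem : ∑ p ∈ P, ‖μ p‖ ∈ {r : ℝ | ∃ (n : ℕ) (P : Fin n → Set ℝ),
      (∀ i, MeasurableSet (P i)) ∧ Pairwise (Function.onFun Disjoint P) ∧ (∀ i, P i ⊆ S) ∧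
      r = ∑ i, ‖μ (P i)‖} :=
    ⟨P.card, fun i => P.equivFin.symm i, fun i => hPm _ (P.equivFin.symm i).2,
      fun i j hij => hPd (P.equivFin.symm i).2 (P.equivFin.symm j).2
        fun h => hij (P.equivFin.symm.injective (Subtype.ext h)),
      fun i => hPS _ (P.equivFin.symm i).2,
      (Finset.sum_coe_sort P _).symm.trans (Equiv.sum_comp P.equivFin.symm _).symm⟩
  calc c < ∑ p ∈ P, ‖μ p‖ₑ := hc
    _ = ENNReal.ofReal (∑ p ∈ P, ‖μ p‖) := by
        rw [ENNReal.ofReal_sum_of_nonneg fun p _ => norm_nonneg _]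
        simp only [ofReal_norm]
    _ ≤ ENNReal.ofReal (cmVar μ S) := ENNReal.ofReal_le_ofReal (le_csSup hbdd hmem)

theorem cmSupportedIn.restrict_variation (hSm : MeasurableSet S) (h : cmSupportedIn μ S) :
    μ.variation.restrict S = μ.variation := by
  refine Measure.restrict_eq_self_of_ae_mem ((ae_iff).2 ?_)
  exact (VectorMeasure.variation_apply_eq_zero hSm.compl).2 fun t ht htm =>
    h t htm (disjoint_compl_left.mono_left ht)

theorem cmSupportedIn.integrable_variation (hS : IsCompact S) (hSm : MeasurableSet S)
    (h : cmSupportedIn μ S) (hf : ContinuousOn f S) : Integrable f μ.variation := by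
  rw [← h.restrict_variation hSm]
  exact hf.integrableOn_compact hS

theorem cmSupportedIn.norm_cmInt_le (hS : IsCompact S) (hSm : MeasurableSet S)
    (h : cmSupportedIn μ S) (hf : ContinuousOn f S) {M : ℝ} (hM0 : 0 ≤ M)
    (hM : ∀ x ∈ S, ‖f x‖ ≤ M) : ‖cmInt μ f‖ ≤ 2 * M * cmVar μ S :=
  calc ‖cmInt μ f‖ ≤ 2 * ∫ x, ‖f x‖ ∂μ.variation :=
        norm_cmInt_le_two_mul_integral_norm (h.integrable_variation hS hSm hf)
    _ = 2 * ∫ x in S, ‖f x‖ ∂μ.variation := by rw [h.restrict_variation hSm]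
    _ ≤ 2 * (M * μ.variation.real S) := by
        gcongr
        refine (Real.le_norm_self _).trans (norm_setIntegral_le_of_norm_le_const
          (measure_lt_top _ _) fun x hx => (norm_norm (f x)).trans_le (hM x hx))
    _ ≤ 2 * M * cmVar μ S := by
        rw [← mul_assoc]
        gcongr
        exact variation_real_le_cmVar hSm

end cmInt

theorem Real.exp_sub_sum_range_le_exp_mul_div_pow {t D : ℝ} (ht : 0 ≤ t) (hD : 1 ≤ D) (m : ℕ) :
    Real.exp t - ∑ l ∈ Finset.range m, t ^ l / l ! ≤ Real.exp (D * t) / D ^ m := by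
  have hexp (x : ℝ) : HasSum (fun l => x ^ l / l !) (Real.exp x) := by
    rw [Real.exp_eq_exp_ℝ]
    exact NormedSpace.expSeries_div_hasSum_exp x
  rw [le_div_iff₀ (by positivity)]
  have htail := ((hasSum_nat_add_iff' m).2 (hexp t)).mul_right (D ^ m)
  have htailD := (hasSum_nat_add_iff' m).2 (hexp (D * t))
  refine (hasSum_le (fun l => ?_) htail htailD).trans
    (sub_le_self _ (Finset.sum_nonneg fun l _ => by positivity))
  rw [mul_pow, div_mul_eq_mul_div, mul_comm]
  gcongr
  exact Nat.le_add_left m l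

noncomputable def expTaylorRemainder (m : ℕ) (w : ℂ) : ℂ :=
  Complex.exp w - ∑ l ∈ Finset.range m, w ^ l / l !

theorem norm_expTaylorRemainder_le (m : ℕ) (w : ℂ) {D : ℝ} (hD : 1 ≤ D) :
    ‖expTaylorRemainder m w‖ ≤ Real.exp (D * ‖w‖) / D ^ m :=
  (Complex.norm_exp_sub_sum_le_exp_norm_sub_sum w m).trans
    (Real.exp_sub_sum_range_le_exp_mul_div_pow (norm_nonneg w) hD m)

theorem norm_expTaylorRemainder_I_mul_le {x ρ D : ℝ} (hx : |x| ≤ ρ) (z : ℂ) (m : ℕ)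
    (hD : 1 ≤ D) : ‖expTaylorRemainder m (I * x * z)‖ ≤ Real.exp (D * ρ * ‖z‖) / D ^ m := by
  have hnorm : ‖I * x * z‖ ≤ ρ * ‖z‖ := by
    rw [norm_mul, norm_mul, norm_I, one_mul, norm_real, Real.norm_eq_abs]
    gcongr
  refine (norm_expTaylorRemainder_le m _ hD).trans ?_
  gcongr Real.exp ?_ / _
  exact (mul_le_mul_of_nonneg_left hnorm (zero_le_one.trans hD)).trans_eq (mul_assoc _ _ _).symm

@[fun_prop]
theorem continuous_expTaylorRemainder (m : ℕ) : Continuous (expTaylorRemainder m) := by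
  unfold expTaylorRemainder
  fun_prop

theorem sum_mul_cmInt_exp_sub_exp_eq {ι : Type*} {S : Set ℝ} (hS : IsCompact S)
    (hSm : MeasurableSet S) {t : Finset ι} {C : ι → ℂ} {μ : ι → ComplexMeasure ℝ}
    (hμ : ∀ j ∈ t, cmSupportedIn (μ j) S) {a : ℝ} {m : ℕ}
    (hmom : ∀ l < m, ∑ j ∈ t, C j * cmInt (μ j) (fun k => (I * k) ^ l) = (I * a) ^ l) (z : ℂ) :
    ∑ j ∈ t, C j * cmInt (μ j) (fun k => Complex.exp (I * k * z)) - Complex.exp (I * a * z)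
      = ∑ j ∈ t, C j * cmInt (μ j) (fun k => expTaylorRemainder m (I * k * z))
        - expTaylorRemainder m (I * a * z) := by
  have htaylor (w : ℂ) :
      Complex.exp w = expTaylorRemainder m w + ∑ l ∈ Finset.range m, w ^ l / l ! := by
    rw [expTaylorRemainder, sub_add_cancel]
  have hsplit : ∀ j ∈ t, cmInt (μ j) (fun k => Complex.exp (I * k * z))
      = cmInt (μ j) (fun k => expTaylorRemainder m (I * k * z))
        + ∑ l ∈ Finset.range m, z ^ l / l ! * cmInt (μ j) (fun k => (I * k) ^ l) := by
    intro j hj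
    have hint {g : ℝ → ℂ} (hg : Continuous g) : Integrable g (μ j).variation :=
      (hμ j hj).integrable_variation hS hSm hg.continuousOn
    have hexp : (fun k : ℝ => Complex.exp (I * k * z)) = fun k : ℝ =>
        expTaylorRemainder m (I * k * z) + ∑ l ∈ Finset.range m, z ^ l / l ! * (I * k) ^ l := by
      funext k
      rw [htaylor]
      congr 1
      exact Finset.sum_congr rfl fun l _ => by rw [mul_pow]; ring
    rw [hexp, cmInt_add (hint (by fun_prop)) (hint (by fun_prop)),
      cmInt_finsetSum _ fun l _ => hint (by fun_prop)]
    simp only [cmInt_const_mul]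
  have hmoments : ∑ j ∈ t, C j * ∑ l ∈ Finset.range m,
      z ^ l / l ! * cmInt (μ j) (fun k => (I * k) ^ l)
        = ∑ l ∈ Finset.range m, (I * a * z) ^ l / l ! := by
    simp only [Finset.mul_sum]
    rw [Finset.sum_comm]
    refine Finset.sum_congr rfl fun l hl => ?_
    rw [mul_pow, ← hmom l (Finset.mem_range.1 hl), Finset.sum_mul, Finset.sum_div]
    exact Finset.sum_congr rfl fun j _ => by ring
  rw [Finset.sum_congr rfl fun j hj => by rw [hsplit j hj], htaylor (I * a * z)]
  simp only [mul_add, Finset.sum_add_distrib, hmoments]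
  ring

theorem norm_sum_mul_cmInt_exp_sub_exp_le {ι : Type*} {S : Set ℝ} (hS : IsCompact S)
    (hSm : MeasurableSet S) {t : Finset ι} {C : ι → ℂ} {μ : ι → ComplexMeasure ℝ}
    (hμ : ∀ j ∈ t, cmSupportedIn (μ j) S) {a : ℝ} {m : ℕ}
    (hmom : ∀ l < m, ∑ j ∈ t, C j * cmInt (μ j) (fun k => (I * k) ^ l) = (I * a) ^ l)
    {ρ : ℝ} (hSρ : ∀ x ∈ S, |x| ≤ ρ) (haρ : |a| ≤ ρ) {κ : ℝ}
    (hκ : ∀ j ∈ t, ‖C j‖ * cmVar (μ j) S ≤ κ) {D : ℝ} (hD : 1 ≤ D) (z : ℂ) :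
    ‖∑ j ∈ t, C j * cmInt (μ j) (fun k => Complex.exp (I * k * z)) - Complex.exp (I * a * z)‖
      ≤ (2 * t.card * κ + 1) / D ^ m * Real.exp (D * ρ * ‖z‖) := by
  set E := Real.exp (D * ρ * ‖z‖) / D ^ m with hE
  have hterm : ∀ j ∈ t,
      ‖C j * cmInt (μ j) (fun k => expTaylorRemainder m (I * k * z))‖ ≤ 2 * E * κ := by
    intro j hj
    calc ‖C j * cmInt (μ j) (fun k => expTaylorRemainder m (I * k * z))‖
        ≤ ‖C j‖ * (2 * E * cmVar (μ j) S) := by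
          rw [norm_mul]
          gcongr
          exact (hμ j hj).norm_cmInt_le hS hSm (by fun_prop) (by positivity)
            fun x hx => norm_expTaylorRemainder_I_mul_le (hSρ x hx) z m hD
      _ = 2 * E * (‖C j‖ * cmVar (μ j) S) := by ring
      _ ≤ 2 * E * κ := by gcongr; exact hκ j hj
  rw [sum_mul_cmInt_exp_sub_exp_eq hS hSm hμ hmom z]
  calc _ ≤ t.card * (2 * E * κ) + E :=
        (norm_sub_le _ _).trans (add_le_add
          ((norm_sum_le _ _).trans ((Finset.sum_le_card_nsmul _ _ _ hterm).trans_eq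
            (nsmul_eq_mul _ _)))
          (norm_expTaylorRemainder_I_mul_le haρ z m hD))
    _ = (2 * t.card * κ + 1) / D ^ m * Real.exp (D * ρ * ‖z‖) := by rw [hE]; ring

theorem tendstoA1_of_norm_sub_le {F : ℕ → ℂ → ℂ} {G : ℂ → ℂ} {B : ℝ} (hB : 0 ≤ B)
    {u : ℕ → ℝ} (hu : Tendsto u atTop (𝓝 0))
    (h : ∀ n z, ‖F n z - G z‖ ≤ u n * Real.exp (B * ‖z‖)) : TendstoA1 F G := by
  refine ⟨B, hB, fun ε hε => ?_⟩
  obtain ⟨N, hN⟩ := eventually_atTop.1 (hu.eventually (ge_mem_nhds hε))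
  exact ⟨N, fun n hn z => (h n z).trans (by gcongr; exact hN n hn)⟩

theorem tendsto_succ_mul_pow_add_one_div_pow {K D : ℝ} (hK : 0 ≤ K) (hKD : K < D) (hD : 1 < D)
    (c : ℝ) : Tendsto (fun n : ℕ => (c * (n + 1) * K ^ n + 1) / D ^ (n + 1)) atTop (𝓝 0) := by
  have hD0 : 0 < D := zero_lt_one.trans hD
  have hr : K / D < 1 := (div_lt_one hD0).2 hKD
  have hq : 1 / D < 1 := (div_lt_one hD0).2 hD
  have hlim := (((tendsto_self_mul_const_pow_of_lt_one (div_nonneg hK hD0.le) hr).add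
    (tendsto_pow_atTop_nhds_zero_of_lt_one (div_nonneg hK hD0.le) hr)).const_mul (c / D)).add
    ((tendsto_pow_atTop_nhds_zero_of_lt_one (by positivity) hq).const_mul (1 / D))
  simp only [add_zero, mul_zero] at hlim
  refine hlim.congr fun n => ?_
  rw [div_pow, div_pow, one_pow, pow_succ]
  field_simp

theorem statement8_general (k0 : ℝ) (a : ℝ)
    (μ : ℕ → ℕ → ComplexMeasure ℝ)
    (hsupp : ∀ n j, j ≤ n → cmSupportedIn (μ n j) (Set.Icc (-k0) k0))
    (C : ℕ → ℕ → ℂ)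
    (hmom : ∀ n : ℕ, ∀ l ≤ n, ∑ j ∈ Finset.range (n + 1), C n j *
        cmInt (μ n j) (fun k => (Complex.I * (k : ℂ)) ^ l) = (Complex.I * (a : ℂ)) ^ l)
    (κ₁ κ₂ : ℝ) (hκ₁ : 0 ≤ κ₁) (hκ₂ : 0 ≤ κ₂)
    (hvar : ∀ n j, j ≤ n → cmVar (μ n j) (Set.Icc (-k0) k0) ≤ κ₁ ^ n)
    (hC : ∀ n j, j ≤ n → ‖C n j‖ ≤ κ₂ ^ n)
    (F : ℕ → ℂ → ℂ)
    (hF : ∀ n z, F n z = ∑ j ∈ Finset.range (n + 1), C n j *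
        cmInt (μ n j) (fun k => Complex.exp (Complex.I * (k : ℂ) * z))) :
    (∀ n z, F n z = cmInt (∑ j ∈ Finset.range (n + 1), C n j • μ n j)
        (fun k => Complex.exp (Complex.I * (k : ℂ) * z))) ∧
    TendstoA1 F (fun z => Complex.exp (Complex.I * (a : ℂ) * z)) := by
  have hS : IsCompact (Icc (-k0) k0) := isCompact_Icc
  have hSm : MeasurableSet (Icc (-k0) k0) := measurableSet_Icc
  have hsupp' (n : ℕ) : ∀ j ∈ Finset.range (n + 1), cmSupportedIn (μ n j) (Icc (-k0) k0) :=
    fun j hj => hsupp n j (Finset.mem_range_succ_iff.1 hj)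
  refine ⟨fun n z => ?_, ?_⟩
  · rw [hF, cmInt_finsetSum_smul_measure _ _ fun j hj =>
      (hsupp' n j hj).integrable_variation hS hSm (by fun_prop)]
  set K := κ₂ * κ₁
  set D := K + 2
  set ρ := max k0 |a|
  have hK : 0 ≤ K := mul_nonneg hκ₂ hκ₁
  have hCvar (n : ℕ) :
      ∀ j ∈ Finset.range (n + 1), ‖C n j‖ * cmVar (μ n j) (Icc (-k0) k0) ≤ K ^ n := by
    intro j hj
    have hjn := Finset.mem_range_succ_iff.1 hj
    rw [mul_pow]
    exact mul_le_mul_of_nonneg (hC n j hjn) (hvar n j hjn) (norm_nonneg _) (pow_nonneg hκ₁ n)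
  have hbound (n : ℕ) (z : ℂ) : ‖F n z - Complex.exp (I * a * z)‖
      ≤ (2 * (n + 1) * K ^ n + 1) / D ^ (n + 1) * Real.exp (D * ρ * ‖z‖) := by
    have h := norm_sum_mul_cmInt_exp_sub_exp_le hS hSm (hsupp' n)
      (fun l hl => hmom n l (Nat.lt_succ_iff.1 hl))
      (fun x hx => (abs_le.2 hx).trans (le_max_left _ _)) (le_max_right _ _) (hCvar n)
      (by linarith : 1 ≤ D) z
    rwa [Finset.card_range, Nat.cast_add_one, ← hF] at h
  exact tendstoA1_of_norm_sub_le (by positivity)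
    (tendsto_succ_mul_pow_add_one_div_pow hK (by linarith) (by linarith) 2) hbound

/-- Theorem 4.1 of the paper. Let `k0 > 0`,
`a ∈ ℝ∖[-k0,k0]`, `μ_{j,n}` complex Borel measures on `[-k0,k0]` and
`C_j(n) ∈ ℂ` satisfying the moment conditions
`Σ_{j≤n} C_j(n) ∫ (ik)^l dμ_{j,n} = (ia)^l` for `l ≤ n`, with bounds
`|μ_{j,n}|([-k0,k0]) ≤ κ₁ⁿ` and `|C_j(n)| ≤ κ₂ⁿ`. Then the functions
`F_n(z) = Σ_{j≤n} C_j(n) ∫ e^{ikz} dμ_{j,n}(k)` are representable by the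
complex measures `μ_n = Σ_{j≤n} C_j(n) μ_{j,n}` and converge to `z ↦ e^{iaz}`
in `𝒜₁(ℂ)`; in particular the sequence `F_n` is superoscillating. -/
theorem statement8 (k0 : ℝ) (hk0 : 0 < k0) (a : ℝ) (ha : a ∉ Set.Icc (-k0) k0)
    (μ : ℕ → ℕ → ComplexMeasure ℝ)
    (hsupp : ∀ n j, j ≤ n → cmSupportedIn (μ n j) (Set.Icc (-k0) k0))
    (C : ℕ → ℕ → ℂ)
    (hmom : ∀ n : ℕ, ∀ l ≤ n, ∑ j ∈ Finset.range (n + 1), C n j *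
        cmInt (μ n j) (fun k => (Complex.I * (k : ℂ)) ^ l) = (Complex.I * (a : ℂ)) ^ l)
    (κ₁ κ₂ : ℝ) (hκ₁ : 0 ≤ κ₁) (hκ₂ : 0 ≤ κ₂)
    (hvar : ∀ n j, j ≤ n → cmVar (μ n j) (Set.Icc (-k0) k0) ≤ κ₁ ^ n)
    (hC : ∀ n j, j ≤ n → ‖C n j‖ ≤ κ₂ ^ n)
    (F : ℕ → ℂ → ℂ)
    (hF : ∀ n z, F n z = ∑ j ∈ Finset.range (n + 1), C n j *
        cmInt (μ n j) (fun k => Complex.exp (Complex.I * (k : ℂ) * z))) :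
    (∀ n z, F n z = cmInt (∑ j ∈ Finset.range (n + 1), C n j • μ n j)
        (fun k => Complex.exp (Complex.I * (k : ℂ) * z))) ∧
    TendstoA1 F (fun z => Complex.exp (Complex.I * (a : ℂ) * z)) :=
  statement8_general k0 a μ hsupp C hmom κ₁ κ₂ hκ₁ hκ₂ hvar hC F hF
end

section
/- For n ∈ ℕ, n ≥ 1, and the frequencies k_j(n) = 1 − 2j/n, j ∈ {0,…,n}, one has for every j ∈ {0,…,n} the lower bound Π_{l=0, l≠j}^{n} |k_l(n) − k_j(n)| = 2ⁿ n! / (nⁿ · binom(n,j)) ≥ e^{−n}. -/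
/-!
The frequencies are equally spaced with step `2/n`, so the product is
`(2/n)ⁿ · j! (n-j)! = 2ⁿ n! / (nⁿ binom(n,j))`. The lower bound combines `binom(n,j) ≤ 2ⁿ` with
`nⁿ/n! ≤ eⁿ`, a single term of the exponential series.
-/

open Finset Nat Real

lemma prod_range_erase_abs_sub_natCast {j n : ℕ} (hj : j ≤ n) :
    ∏ l ∈ (range (n + 1)).erase j, |(l : ℝ) - j| = j ! * (n - j)! := by
  have hsplit : (range (n + 1)).erase j = range j ∪ Ico (j + 1) (n + 1) := by
    ext l
    simp only [mem_erase, mem_range, mem_union, mem_Ico]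
    omega
  have hdisj : Disjoint (range j) (Ico (j + 1) (n + 1)) :=
    disjoint_left.2 fun l hl hl' => by simp only [mem_range, mem_Ico] at hl hl'; omega
  have below : ∏ l ∈ range j, |(l : ℝ) - j| = j ! := by
    rw [← descFactorial_self, descFactorial_eq_prod_range, cast_prod]
    refine prod_congr rfl fun l hl => ?_
    rw [abs_sub_comm, cast_sub (mem_range.1 hl).le, abs_of_nonneg (sub_nonneg.2 ?_)]
    exact_mod_cast (mem_range.1 hl).le
  have above : ∏ l ∈ Ico (j + 1) (n + 1), |(l : ℝ) - j| = (n - j)! := by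
    rw [prod_Ico_eq_prod_range, show n + 1 - (j + 1) = n - j by omega,
      factorial_eq_prod_range_add_one, cast_prod]
    refine prod_congr rfl fun i _ => ?_
    rw [show ((j + 1 + i : ℕ) : ℝ) - j = (i + 1 : ℕ) by push_cast; ring,
      abs_of_nonneg (by positivity)]
  rw [hsplit, prod_union hdisj, below, above]

lemma prod_range_erase_abs_sub_affine (a d : ℝ) {j n : ℕ} (hj : j ≤ n) :
    ∏ l ∈ (range (n + 1)).erase j, |(a + d * l) - (a + d * j)| =
      |d| ^ n * (j ! * (n - j)!) := by
  simp_rw [add_sub_add_left_eq_sub, ← mul_sub, abs_mul]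
  rw [prod_mul_distrib, prod_const, card_erase_of_mem (mem_range.2 (by omega)), card_range,
    Nat.add_sub_cancel, prod_range_erase_abs_sub_natCast hj]

lemma natCast_pow_self_pos (n : ℕ) : 0 < (n : ℝ) ^ n := by
  exact_mod_cast Nat.pow_self_pos

lemma exp_neg_le_factorial_div_pow (n : ℕ) : exp (-n) ≤ n ! / (n : ℝ) ^ n := by
  rw [exp_neg, inv_le_comm₀ (exp_pos _) (div_pos (by positivity) (natCast_pow_self_pos n)),
    inv_div]
  exact pow_div_factorial_le_exp _ n.cast_nonneg n

theorem statement11_general (n : ℕ) (k : ℕ → ℝ)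
    (hk : ∀ j : ℕ, k j = 1 - 2 * (j : ℝ) / (n : ℝ)) :
    ∀ j ≤ n,
      (∏ l ∈ (Finset.range (n + 1)).erase j, |k l - k j|) =
        2 ^ n * (Nat.factorial n : ℝ) / ((n : ℝ) ^ n * (Nat.choose n j : ℝ)) ∧
      Real.exp (-(n : ℝ)) ≤
        2 ^ n * (Nat.factorial n : ℝ) / ((n : ℝ) ^ n * (Nat.choose n j : ℝ)) := by
  intro j hj
  obtain rfl : k = fun l : ℕ => 1 + (-2 / (n : ℝ)) * l := funext fun l => by rw [hk]; ring
  have hchoose : (0 : ℝ) < n.choose j := by exact_mod_cast choose_pos hj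
  refine ⟨?_, ?_⟩
  · rw [prod_range_erase_abs_sub_affine 1 (-2 / n) hj, cast_choose ℝ hj, abs_div, abs_neg,
      abs_two, Nat.abs_cast, div_pow]
    field_simp
  · calc exp (-n) ≤ n ! / (n : ℝ) ^ n := exp_neg_le_factorial_div_pow n
      _ = 2 ^ n * n ! / ((n : ℝ) ^ n * 2 ^ n) := by
        rw [mul_comm ((n : ℝ) ^ n), mul_div_mul_left _ _ (by positivity)]
      _ ≤ 2 ^ n * n ! / ((n : ℝ) ^ n * n.choose j) := by
        gcongr
        · exact mul_pos (natCast_pow_self_pos n) hchoose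
        · exact_mod_cast choose_le_two_pow n j

/-- Remark 4.3 of the paper. For `n ≥ 1` and the frequencies
`k_j(n) = 1 - 2j/n`, `j ∈ {0,…,n}`, one has
`Π_{l≠j} |k_l(n) - k_j(n)| = 2ⁿ n! / (nⁿ · binom(n,j)) ≥ e^{-n}`. -/
theorem statement11 (n : ℕ) (hn : 1 ≤ n) (k : ℕ → ℝ)
    (hk : ∀ j : ℕ, k j = 1 - 2 * (j : ℝ) / (n : ℝ)) :
    ∀ j ≤ n,
      (∏ l ∈ (Finset.range (n + 1)).erase j, |k l - k j|) =
        2 ^ n * (Nat.factorial n : ℝ) / ((n : ℝ) ^ n * (Nat.choose n j : ℝ)) ∧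
      Real.exp (-(n : ℝ)) ≤
        2 ^ n * (Nat.factorial n : ℝ) / ((n : ℝ) ^ n * (Nat.choose n j : ℝ)) :=
  statement11_general n k hk
end

section
/- Let b > 0. Then for every z ∈ ℂ one has sinc(√(z² + b²)) = (1/2) ∫_{−1}^{1} e^{ikz} J₀(b√(1−k²)) dk, where J₀(x) = (1/π) ∫_0^π cos(x cos θ) dθ is the Bessel function of order zero and sinc(√w) denotes the entire function Σ_{n=0}^∞ ((−1)^n/(2n+1)!) w^n evaluated at w = z² + b². -/
/-- The entire function `w ↦ sinc(√w) = Σ_{n=0}^∞ ((-1)^n/(2n+1)!) wⁿ`. -/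
noncomputable def sincSqrt (w : ℂ) : ℂ :=
  ∑' n : ℕ, ((-1 : ℂ) ^ n / (Nat.factorial (2 * n + 1) : ℂ)) * w ^ n

/-- The Bessel function of order zero, `J₀(x) = (1/π) ∫₀^π cos(x cos θ) dθ`. -/
noncomputable def besselJ0 (x : ℝ) : ℝ :=
  (1 / Real.pi) * ∫ θ in (0:ℝ)..Real.pi, Real.cos (x * Real.cos θ)

/-! Both sides are expanded into the double series
`Σ_{m,n} (-1)^(m+n) C(m+n, m) / (2(m+n)+1)! · z^(2m) b^(2n)`.
On the left, summing along the antidiagonals `m + n = N` recovers `(z² + b²)^N` by the binomial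
theorem. On the right, integrating the Taylor series of `cos` termwise against Wallis' integrals
gives `J₀(x) = Σ (-1)ⁿ (x²/4)ⁿ / n!²`; expanding `e^{ikz}` then leaves the moments
`∫₋₁¹ k^j (1 - k²)ⁿ dk`, which vanish for odd `j` by symmetry and for `j = 2m` satisfy a two-term
recursion in `n` coming from `(1 - k²)^(n+1) = (1 - k²)ⁿ - k² (1 - k²)ⁿ`. -/

open MeasureTheory Real Nat

theorem hasSum_intervalIntegral_of_norm_le {ι E : Type*} [Countable ι] [NormedAddCommGroup E]
    [NormedSpace ℝ E] {f : ι → ℝ → E} {F : ℝ → E} {M : ι → ℝ} {a b : ℝ}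
    (hf : ∀ i, Continuous (f i)) (hfM : ∀ i, ∀ x ∈ Set.uIcc a b, ‖f i x‖ ≤ M i)
    (hM : Summable M) (hF : ∀ x ∈ Set.uIcc a b, HasSum (fun i ↦ f i x) (F x)) :
    HasSum (fun i ↦ ∫ x in a..b, f i x) (∫ x in a..b, F x) :=
  intervalIntegral.hasSum_integral_of_dominated_convergence (fun i _ ↦ M i)
    (fun i ↦ (hf i).aestronglyMeasurable)
    (fun i ↦ ae_of_all _ fun x hx ↦ hfM i x (Set.uIoc_subset_uIcc hx))
    (ae_of_all _ fun _ _ ↦ hM) intervalIntegrable_const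
    (ae_of_all _ fun x hx ↦ hF x (Set.uIoc_subset_uIcc hx))

theorem Function.Odd.intervalIntegral_eq_zero {E : Type*} [NormedAddCommGroup E]
    [NormedSpace ℝ E] {f : ℝ → E} (hf : f.Odd) (a : ℝ) :
    ∫ x in -a..a, f x = 0 := by
  have h := intervalIntegral.integral_comp_neg (a := -a) (b := a) f
  simp only [show ∀ x, f (-x) = -f x from hf, intervalIntegral.integral_neg, neg_neg] at h
  have h2 : (2 : ℝ) • ∫ x in -a..a, f x = 0 := by
    rw [two_smul]
    nth_rw 1 [← h]
    exact neg_add_cancel _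
  exact (smul_eq_zero.mp h2).resolve_left two_ne_zero

theorem integral_cos_pow_even (n : ℕ) :
    ∫ θ in (0 : ℝ)..π, cos θ ^ (2 * n) = π * (2 * n)! / (4 ^ n * (n ! : ℝ) ^ 2) := by
  induction n with
  | zero => simp
  | succ n ih =>
    rw [mul_add_one, integral_cos_pow, ih, Nat.factorial_succ, Nat.factorial_succ,
      Nat.factorial_succ]
    simp only [sin_pi, sin_zero, mul_zero, sub_zero, zero_div, zero_add]
    push_cast
    field_simp
    ring

theorem summable_pow_two_mul_div_factorial (x : ℝ) :
    Summable fun n : ℕ ↦ x ^ (2 * n) / (2 * n)! :=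
  (Real.summable_pow_div_factorial x).comp_injective (mul_right_injective₀ two_ne_zero)

@[fun_prop]
theorem continuous_besselJ0 : Continuous besselJ0 :=
  continuous_const.mul <| intervalIntegral.continuous_parametric_intervalIntegral_of_continuous'
    (by fun_prop) _ _

theorem abs_besselJ0_le_one (x : ℝ) : |besselJ0 x| ≤ 1 := by
  have h : ‖∫ θ in (0 : ℝ)..π, cos (x * cos θ)‖ ≤ 1 * |π - 0| :=
    intervalIntegral.norm_integral_le_of_norm_le_const fun θ _ ↦ abs_cos_le_one _
  rw [sub_zero, abs_of_pos pi_pos, one_mul, norm_eq_abs] at h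
  rw [besselJ0, abs_mul, abs_of_pos (by positivity), one_div, inv_mul_le_iff₀ pi_pos, mul_one]
  exact h

theorem hasSum_besselJ0 (x : ℝ) :
    HasSum (fun n : ℕ ↦ (-1) ^ n / (n ! : ℝ) ^ 2 * (x ^ 2 / 4) ^ n) (besselJ0 x) := by
  have hint : HasSum (fun n : ℕ ↦ ∫ θ in (0 : ℝ)..π, (-1) ^ n * (x * cos θ) ^ (2 * n) / (2 * n)!)
      (∫ θ in (0 : ℝ)..π, cos (x * cos θ)) := by
    refine hasSum_intervalIntegral_of_norm_le (fun n ↦ by fun_prop) (fun n θ _ ↦ ?_)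
      (summable_pow_two_mul_div_factorial |x|) fun θ _ ↦ hasSum_cos _
    rw [norm_div, norm_mul, norm_pow, norm_neg, norm_one, one_pow, one_mul, norm_pow, norm_mul,
      norm_natCast, norm_eq_abs, norm_eq_abs]
    gcongr
    exact mul_le_of_le_one_right (abs_nonneg x) (abs_cos_le_one θ)
  have hterm (n : ℕ) : ∫ θ in (0 : ℝ)..π, (-1) ^ n * (x * cos θ) ^ (2 * n) / (2 * n)!
      = π * ((-1) ^ n / (n ! : ℝ) ^ 2 * (x ^ 2 / 4) ^ n) := by
    simp_rw [show ∀ θ, (-1) ^ n * (x * cos θ) ^ (2 * n) / ((2 * n)! : ℝ)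
        = (-1) ^ n * x ^ (2 * n) / (2 * n)! * cos θ ^ (2 * n) from fun θ ↦ by ring]
    rw [intervalIntegral.integral_const_mul, integral_cos_pow_even, pow_mul, div_pow]
    field_simp
  rw [funext hterm] at hint
  rw [besselJ0, one_div]
  simpa only [inv_mul_cancel_left₀ pi_ne_zero] using hint.mul_left π⁻¹

theorem integral_pow_even_mul_one_sub_sq_pow (m n : ℕ) :
    ∫ k in (-1 : ℝ)..1, k ^ (2 * m) * (1 - k ^ 2) ^ n
      = (2 * (2 * m)! * 4 ^ n * n ! * (m + n)! / (m ! * (2 * (m + n) + 1)!) : ℝ) := by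
  induction n generalizing m with
  | zero =>
    simp only [pow_zero, mul_one, integral_pow, add_zero, Nat.factorial_succ]
    rw [Odd.neg_one_pow ⟨m, rfl⟩]
    push_cast
    field_simp
    ring
  | succ n ih =>
    have hsplit : ∫ k in (-1 : ℝ)..1, k ^ (2 * m) * (1 - k ^ 2) ^ (n + 1)
        = (∫ k in (-1 : ℝ)..1, k ^ (2 * m) * (1 - k ^ 2) ^ n)
          - ∫ k in (-1 : ℝ)..1, k ^ (2 * (m + 1)) * (1 - k ^ 2) ^ n := by
      rw [← intervalIntegral.integral_sub (by apply Continuous.intervalIntegrable; fun_prop)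
        (by apply Continuous.intervalIntegrable; fun_prop)]
      congr 1 with k
      ring
    rw [hsplit, ih m, ih (m + 1)]
    simp only [show 2 * (m + 1) = 2 * m + 1 + 1 by ring, show m + 1 + n = m + n + 1 by ring,
      show m + (n + 1) = m + n + 1 by ring, show 2 * (m + n + 1) + 1 = 2 * (m + n) + 1 + 1 + 1 by ring,
      Nat.factorial_succ]
    push_cast
    field_simp
    ring

noncomputable def sincSqrtAddTerm (x y : ℂ) (p : ℕ × ℕ) : ℂ :=
  (-1) ^ (p.1 + p.2) / (2 * (p.1 + p.2) + 1)! * (p.1 + p.2).choose p.1 * x ^ p.1 * y ^ p.2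

theorem norm_sincSqrtAddTerm_le (x y : ℂ) (p : ℕ × ℕ) :
    ‖sincSqrtAddTerm x y p‖ ≤ ‖x‖ ^ p.1 / p.1 ! * (‖y‖ ^ p.2 / p.2 !) := by
  obtain ⟨m, n⟩ := p
  have hfact : ((m + n)! : ℝ) ≤ (2 * (m + n) + 1)! := mod_cast Nat.factorial_le (by omega)
  calc ‖sincSqrtAddTerm x y (m, n)‖
      = (m + n)! / (2 * (m + n) + 1)! * (‖x‖ ^ m / m ! * (‖y‖ ^ n / n !)) := by
        simp only [sincSqrtAddTerm, norm_mul, norm_div, norm_pow, norm_neg, norm_one, one_pow,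
          Complex.norm_natCast, Nat.cast_add_choose]
        ring
    _ ≤ 1 * (‖x‖ ^ m / m ! * (‖y‖ ^ n / n !)) := by
        gcongr
        exact div_le_one_of_le₀ hfact (by positivity)
    _ = _ := one_mul _

theorem summable_sincSqrtAddTerm (x y : ℂ) : Summable (sincSqrtAddTerm x y) :=
  .of_norm_bounded ((Real.summable_pow_div_factorial ‖x‖).mul_of_nonneg
    (Real.summable_pow_div_factorial ‖y‖) (fun _ ↦ by positivity) fun _ ↦ by positivity)
    (norm_sincSqrtAddTerm_le x y)

theorem sum_antidiagonal_sincSqrtAddTerm (x y : ℂ) (N : ℕ) :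
    ∑ p ∈ Finset.HasAntidiagonal.antidiagonal N, sincSqrtAddTerm x y p
      = (-1) ^ N / (2 * N + 1)! * (x + y) ^ N := by
  rw [(Commute.all x y).add_pow', Finset.mul_sum]
  refine Finset.sum_congr rfl fun p hp ↦ ?_
  rw [sincSqrtAddTerm, Finset.HasAntidiagonal.mem_antidiagonal.mp hp, nsmul_eq_mul]
  ring

theorem hasSum_sincSqrt_add (x y : ℂ) : HasSum (sincSqrtAddTerm x y) (sincSqrt (x + y)) := by
  have hdiag : HasSum (fun N : ℕ ↦ (-1) ^ N / (2 * N + 1)! * (x + y) ^ N)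
      (∑' p, sincSqrtAddTerm x y p) := by
    refine (Finset.HasAntidiagonal.sigmaAntidiagonalEquivProd.hasSum_iff.2
      (summable_sincSqrtAddTerm x y).hasSum).sigma fun N ↦ ?_
    rw [← sum_antidiagonal_sincSqrtAddTerm, ← Finset.sum_coe_sort]
    exact hasSum_fintype _
  rw [sincSqrt, hdiag.tsum_eq]
  exact (summable_sincSqrtAddTerm x y).hasSum

noncomputable def besselMoment (b : ℝ) (j : ℕ) : ℝ :=
  ∫ k in (-1 : ℝ)..1, k ^ j * besselJ0 (b * √(1 - k ^ 2))

theorem hasSum_besselMoment (b : ℝ) (j : ℕ) :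
    HasSum (fun n : ℕ ↦ (-1) ^ n / (n ! : ℝ) ^ 2 * (b ^ 2 / 4) ^ n
        * ∫ k in (-1 : ℝ)..1, k ^ j * (1 - k ^ 2) ^ n)
      (besselMoment b j) := by
  simp_rw [← intervalIntegral.integral_const_mul]
  refine hasSum_intervalIntegral_of_norm_le (M := fun n ↦ (b ^ 2 / 4) ^ n / n !)
    (fun n ↦ by fun_prop) (fun n k hk ↦ ?_) (Real.summable_pow_div_factorial _) fun k hk ↦ ?_
  all_goals
    rw [Set.uIcc_of_le (by norm_num)] at hk
    have hk2 : 0 ≤ 1 - k ^ 2 := by nlinarith [hk.1, hk.2]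
  · have hfac : (n ! : ℝ) ≤ (n ! : ℝ) ^ 2 := by
      rw [sq]; exact le_mul_of_one_le_left (by positivity) (mod_cast n.factorial_pos)
    have hk1 : ‖k‖ ^ j * ‖1 - k ^ 2‖ ^ n ≤ 1 := by
      rw [norm_eq_abs, norm_eq_abs, abs_of_nonneg hk2]
      exact mul_le_one₀ (pow_le_one₀ (abs_nonneg k) (abs_le.mpr hk))
        (by positivity) (pow_le_one₀ hk2 (by nlinarith))
    calc ‖(-1) ^ n / (n ! : ℝ) ^ 2 * (b ^ 2 / 4) ^ n * (k ^ j * (1 - k ^ 2) ^ n)‖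
        ≤ 1 / (n ! : ℝ) ^ 2 * (b ^ 2 / 4) ^ n * 1 := by
          simp only [norm_mul, norm_div, norm_pow, norm_neg, norm_one, one_pow, norm_natCast,
            norm_of_nonneg (by positivity : (0 : ℝ) ≤ b ^ 2 / 4)]
          gcongr
      _ ≤ (b ^ 2 / 4) ^ n / n ! := by
          rw [mul_one, one_div_mul_eq_div]
          gcongr
  · refine ((hasSum_besselJ0 (b * √(1 - k ^ 2))).mul_left (k ^ j)).congr_fun fun n ↦ ?_
    rw [mul_pow, sq_sqrt hk2, mul_div_right_comm, mul_pow]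
    ring

theorem besselMoment_two_mul_add_one_eq_zero (b : ℝ) (m : ℕ) : besselMoment b (2 * m + 1) = 0 :=
  Function.Odd.intervalIntegral_eq_zero (fun k ↦ by
    rw [neg_sq, Odd.neg_pow ⟨m, rfl⟩, neg_mul]) 1

theorem hasSum_two_mul_sincSqrtAddTerm_row (b : ℝ) (z : ℂ) (m : ℕ) :
    HasSum (fun n ↦ 2 * sincSqrtAddTerm (z ^ 2) (b ^ 2) (m, n))
      ((Complex.I * z) ^ (2 * m) / (2 * m)! * besselMoment b (2 * m)) := by
  have h := (Complex.hasSum_ofReal.mpr (hasSum_besselMoment b (2 * m))).mul_left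
    ((Complex.I * z) ^ (2 * m) / (2 * m)!)
  refine h.congr_fun fun n ↦ ?_
  have h2m : ((2 * m)! : ℂ) ≠ 0 := Nat.cast_ne_zero.mpr (Nat.factorial_ne_zero _)
  rw [integral_pow_even_mul_one_sub_sq_pow, sincSqrtAddTerm, Nat.cast_add_choose, mul_pow,
    pow_mul Complex.I, Complex.I_sq, pow_mul z]
  push_cast
  simp only [div_pow]
  field_simp
  ring

theorem hasSum_exp_mul_besselJ0 (b : ℝ) (z : ℂ) :
    HasSum (fun j : ℕ ↦ (Complex.I * z) ^ j / j ! * besselMoment b j)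
      (∫ k in (-1 : ℝ)..1,
        Complex.exp (Complex.I * k * z) * (besselJ0 (b * √(1 - k ^ 2)) : ℂ)) := by
  have hmoment (j : ℕ) : (besselMoment b j : ℂ)
      = ∫ k in (-1 : ℝ)..1, (k : ℂ) ^ j * (besselJ0 (b * √(1 - k ^ 2)) : ℂ) := by
    rw [besselMoment, ← intervalIntegral.integral_ofReal]
    push_cast
    rfl
  simp_rw [hmoment, ← intervalIntegral.integral_const_mul]
  refine hasSum_intervalIntegral_of_norm_le (M := fun j ↦ ‖z‖ ^ j / j !)
    (fun j ↦ by fun_prop) (fun j k hk ↦ ?_) (Real.summable_pow_div_factorial _) fun k _ ↦ ?_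
  · rw [Set.uIcc_of_le (by norm_num)] at hk
    calc ‖(Complex.I * z) ^ j / j ! * ((k : ℂ) ^ j * (besselJ0 (b * √(1 - k ^ 2)) : ℂ))‖
        ≤ ‖z‖ ^ j / j ! * (1 * 1) := by
          rw [norm_mul, norm_div, norm_pow, norm_mul, Complex.norm_I, one_mul, Complex.norm_natCast,
            norm_mul, norm_pow, Complex.norm_real, Complex.norm_real, norm_eq_abs, norm_eq_abs]
          gcongr
          · exact pow_le_one₀ (abs_nonneg k) (abs_le.mpr hk)
          · exact abs_besselJ0_le_one _
      _ = ‖z‖ ^ j / j ! := by rw [mul_one, mul_one]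
  · rw [Complex.exp_eq_exp_ℂ]
    refine ((NormedSpace.expSeries_div_hasSum_exp (Complex.I * k * z)).mul_right
      (besselJ0 (b * √(1 - k ^ 2)) : ℂ)).congr_fun fun j ↦ ?_
    ring

theorem statement19_general (b : ℝ) (z : ℂ) :
    sincSqrt (z ^ 2 + (b : ℂ) ^ 2) =
      (1 / 2 : ℂ) * ∫ k in (-1:ℝ)..1,
        Complex.exp (Complex.I * (k : ℂ) * z) * (besselJ0 (b * Real.sqrt (1 - k ^ 2)) : ℂ) := by
  have hodd : ∀ j ∉ Set.range (2 * ·), (Complex.I * z) ^ j / j ! * besselMoment b j = 0 := by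
    intro j hj
    obtain ⟨m, rfl⟩ : Odd j := Nat.not_even_iff_odd.mp fun ⟨m, hm⟩ ↦ hj ⟨m, by simp only; omega⟩
    rw [besselMoment_two_mul_add_one_eq_zero, Complex.ofReal_zero, mul_zero]
  have heven := ((mul_right_injective₀ two_ne_zero).hasSum_iff hodd).mpr
    (hasSum_exp_mul_besselJ0 b z)
  have hrows := ((hasSum_sincSqrt_add (z ^ 2) (b ^ 2)).mul_left 2).prod_fiberwise
    (hasSum_two_mul_sincSqrtAddTerm_row b z)
  rw [heven.unique hrows]
  ring

/-- Lemma A.2 of the paper. For `b > 0` and every `z ∈ ℂ`,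
`sinc(√(z² + b²)) = (1/2) ∫_{-1}^{1} e^{ikz} J₀(b √(1-k²)) dk`, where `sinc(√·)`
is understood via the even power series `Σ ((-1)^n/(2n+1)!) wⁿ`. -/
theorem statement19 (b : ℝ) (hb : 0 < b) (z : ℂ) :
    sincSqrt (z ^ 2 + (b : ℂ) ^ 2) =
      (1 / 2 : ℂ) * ∫ k in (-1:ℝ)..1,
        Complex.exp (Complex.I * (k : ℂ) * z) * (besselJ0 (b * Real.sqrt (1 - k ^ 2)) : ℂ) :=
  statement19_general b z
end
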